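/- arXiv:1208.2319 — 12 statements merged into one kernel-verified Lean document; each statement's English description precedes it below -/
import Mathlib

section
/- Let f : X → Y be a compact-preserving function from a Fréchet topological space X to a Hausdorff space Y. Then for each point x ∈ X and each open neighborhood O of f(x) in Y, there is a neighborhood U of x in X such that f(U) ⊆ f[x] ∪ O, where f[x] = {y ∈ Y : x lies in the closure of f⁻¹(y)}. -/
open Filter Topology Set

/-- A function is compact-preserving if images of compact sets are compact. -/
def CompactPreserving {X Y : Type*} [TopologicalSpace X] [TopologicalSpace Y]
    (f : X → Y) : Prop := ∀ K : Set X, IsCompact K → IsCompact (f '' K)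

/-- The oscillation set `f[x] = {y : x ∈ closure (f⁻¹ y)}`. -/
def oscSet {X Y : Type*} [TopologicalSpace X] (f : X → Y) (x : X) : Set Y :=
  {y | x ∈ closure (f ⁻¹' {y})}

/-!
If no neighbourhood works, there is a sequence `uₙ → x` with `f uₙ ∉ f[x] ∪ O` for all `n`.
As `{x} ∪ {uₙ}` is compact, so is its image, and `f ∘ u` has a cluster point `y`; since `f ∘ u`
never enters `O`, `y ≠ f x`. The image of each tail `{x} ∪ {uₙ : n ≥ N}` is compact, hence
closed in `Y`, so it contains the cluster point `y`; as `y ≠ f x`, this means `f uₙ = y` for some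
`n ≥ N`. Thus `f uₙ = y` frequently, so `x ∈ closure (f⁻¹ y)`, i.e. `y = f uₙ ∈ f[x]`, which is
impossible.
-/

namespace CompactPreserving

variable {X Y : Type*} [TopologicalSpace X] [TopologicalSpace Y] {f : X → Y}
  {u : ℕ → X} {x : X}

theorem exists_mapClusterPt (hf : CompactPreserving f) (hu : Tendsto u atTop (𝓝 x)) :
    ∃ y, MapClusterPt y atTop (f ∘ u) := by
  obtain ⟨y, -, hy⟩ := (hf _ hu.isCompact_insert_range).exists_mapClusterPt_of_frequently
    (Frequently.of_forall (f := atTop) fun n =>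
      mem_image_of_mem f (mem_insert_of_mem x (mem_range_self n)))
  exact ⟨y, hy⟩

theorem isClosed_image_insert_range [T2Space Y] (hf : CompactPreserving f)
    (hu : Tendsto u atTop (𝓝 x)) : IsClosed (f '' insert x (range u)) :=
  (hf _ hu.isCompact_insert_range).isClosed

theorem frequently_eq_of_mapClusterPt [T2Space Y] (hf : CompactPreserving f)
    (hu : Tendsto u atTop (𝓝 x)) {y : Y} (hyx : y ≠ f x)
    (hy : MapClusterPt y atTop (f ∘ u)) :
    ∃ᶠ n in atTop, f (u n) = y := by
  intro hne
  obtain ⟨N, hN⟩ := eventually_atTop.1 hne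
  have htail : Tendsto (fun n => u (n + N)) atTop (𝓝 x) := hu.comp (tendsto_add_atTop_nat N)
  have hy_mem : y ∈ f '' insert x (range fun n => u (n + N)) :=
    (hf.isClosed_image_insert_range htail).mem_of_mapClusterPt hy <|
      (eventually_ge_atTop N).mono fun n hn =>
        mem_image_of_mem f (mem_insert_of_mem x ⟨n - N, congrArg u (Nat.sub_add_cancel hn)⟩)
  obtain ⟨z, rfl | ⟨n, rfl⟩, rfl⟩ := hy_mem
  · exact hyx rfl
  · exact hN (n + N) (Nat.le_add_left N n) rfl

end CompactPreserving

theorem stmt0 {X Y : Type*} [TopologicalSpace X] [TopologicalSpace Y]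
    [FrechetUrysohnSpace X] [T2Space Y] (f : X → Y)
    (hf : CompactPreserving f) (x : X) (O : Set Y) (hO : IsOpen O) (hfx : f x ∈ O) :
    ∃ U ∈ 𝓝 x, f '' U ⊆ oscSet f x ∪ O := by
  refine ⟨f ⁻¹' (oscSet f x ∪ O), ?_, image_preimage_subset _ _⟩
  by_contra hnhds
  have hx_bad : x ∈ closure (f ⁻¹' (oscSet f x ∪ O))ᶜ := by
    rwa [closure_compl, mem_compl_iff, mem_interior_iff_mem_nhds]
  obtain ⟨u, hu_bad, hu⟩ := mem_closure_iff_seq_limit.1 hx_bad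
  obtain ⟨y, hy⟩ := hf.exists_mapClusterPt hu
  have hyx : y ≠ f x := by
    rintro rfl
    obtain ⟨n, hn⟩ := (hy.frequently (hO.mem_nhds hfx)).exists
    exact hu_bad n (Or.inr hn)
  have hfreq := hf.frequently_eq_of_mapClusterPt hu hyx hy
  have hy_osc : y ∈ oscSet f x := mem_closure_of_frequently_of_tendsto hfreq hu
  obtain ⟨n, rfl⟩ := hfreq.exists
  exact hu_bad n (Or.inl hy_osc)
end

section
/- Let f : X → Y be a compact-preserving function from a strong Fréchet topological space X to a Hausdorff space Y. Then for each point x ∈ X and each open neighborhood O of f(x) in Y, the set f[x] \ O is finite, where f[x] = {y ∈ Y : x lies in the closure of f⁻¹(y)}. -/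
/-!
Suppose `f[x] \ O` contains distinct points `y₀, y₁, …`. Strong Fréchetness applied to the
preimages of the tails `{yₖ | k ≥ n}` gives `uₙ → x` with `f uₙ = y_{gₙ}`, `gₙ ≥ n`, so `f ∘ u`
has infinite range outside `O`, inside the compact set `f ({x} ∪ range u)`. Its accumulation
points therefore lie outside `O`. On the other hand, an accumulation point `z ≠ f x` is
impossible: deleting the indices with `f uᵢ = z` leaves a compact set `{x} ∪ {uᵢ}` whose
compact, hence closed, image contains the rest of the range but misses `z`.
-/

open Filter Topology Set

/-- A space is strong Fréchet if for every decreasing sequence of sets whose closures all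
contain `a`, one can pick points from the sets converging to `a`. -/
def StrongFrechet (X : Type*) [TopologicalSpace X] : Prop :=
  ∀ (A : ℕ → Set X), (∀ n, A (n + 1) ⊆ A n) → ∀ a : X, (∀ n, a ∈ closure (A n)) →
    ∃ u : ℕ → X, (∀ n, u n ∈ A n) ∧ Filter.Tendsto u Filter.atTop (𝓝 a)

theorem CompactPreserving.eq_of_accPt_range {X Y ι : Type*} [TopologicalSpace X]
    [TopologicalSpace Y] [T2Space Y] {f : X → Y} (hf : CompactPreserving f) {u : ι → X} {x : X}
    (hu : Tendsto u cofinite (𝓝 x)) {z : Y} (hz : AccPt z (𝓟 (range (f ∘ u)))) : z = f x := by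
  by_contra hzx
  set S : Set ι := {i | f (u i) ≠ z}
  set K : Set X := insert x (range fun i : S => u i)
  have hK : IsCompact K :=
    (hu.comp Subtype.val_injective.tendsto_cofinite).isCompact_insert_range_of_cofinite
  have hrange : range (f ∘ u) \ {z} ⊆ f '' K := by
    rintro _ ⟨⟨i, rfl⟩, hi⟩
    exact ⟨u i, mem_insert_of_mem _ ⟨⟨i, hi⟩, rfl⟩, rfl⟩
  have hzK : z ∈ f '' K :=
    closure_minimal hrange (hf K hK).isClosed
      (mem_closure_iff_clusterPt.2 (accPt_principal_iff_clusterPt.1 hz))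
  obtain ⟨p, rfl | ⟨⟨i, hi⟩, rfl⟩, hpz⟩ := hzK
  · exact hzx hpz.symm
  · exact hi hpz

theorem infinite_range_of_forall_mem_image_Ici {Y : Type*} {y v : ℕ → Y}
    (hy : Function.Injective y) (hv : ∀ n, v n ∈ y '' Ici n) : (range v).Infinite := by
  choose g hg hgv using hv
  have hg_unbdd : (range g).Infinite := by
    refine infinite_of_not_bddAbove fun ⟨b, hb⟩ => ?_
    have h₁ := hb (mem_range_self (b + 1))
    have h₂ := hg (b + 1)
    rw [mem_Ici] at h₂
    omega
  have hv_eq : range v = y '' range g := by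
    rw [← range_comp]
    exact congrArg range (funext fun n => (hgv n).symm)
  rw [hv_eq]
  exact hg_unbdd.image hy.injOn

theorem stmt1 {X Y : Type*} [TopologicalSpace X] [TopologicalSpace Y]
    [T2Space Y] (hX : StrongFrechet X) (f : X → Y)
    (hf : CompactPreserving f) (x : X) (O : Set Y) (hO : IsOpen O) (hfx : f x ∈ O) :
    (oscSet f x \ O).Finite := by
  by_contra hinf
  set e := Set.Infinite.natEmbedding _ hinf
  set y : ℕ → Y := fun n => e n
  have hy : Function.Injective y := fun _ _ h => e.injective (Subtype.ext h)
  have hyD : ∀ n, y n ∈ oscSet f x \ O := fun n => (e n).2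
  have hx_mem : ∀ n, x ∈ closure (f ⁻¹' (y '' Ici n)) := fun n =>
    closure_mono (preimage_mono (singleton_subset_iff.2 (mem_image_of_mem y self_mem_Ici)))
      (hyD n).1
  obtain ⟨u, hu, hux⟩ := hX (fun n => f ⁻¹' (y '' Ici n))
    (fun n => preimage_mono (image_mono (Ici_subset_Ici.2 n.le_succ))) x hx_mem
  have hT : range (f ∘ u) ⊆ Oᶜ := by
    rintro _ ⟨n, rfl⟩
    obtain ⟨m, -, hm⟩ := hu n
    show f (u n) ∈ Oᶜ
    exact hm ▸ (hyD m).2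
  obtain ⟨z, -, hz⟩ :=
    (infinite_range_of_forall_mem_image_Ici hy hu).exists_accPt_of_subset_isCompact
      (hf _ hux.isCompact_insert_range) (range_comp f u ▸ image_mono (subset_insert _ _))
  have hzx : z = f x := hf.eq_of_accPt_range (Nat.cofinite_eq_atTop ▸ hux) hz
  have hzO : z ∈ Oᶜ :=
    closure_minimal hT hO.isClosed_compl (mem_closure_iff_clusterPt.2 hz.clusterPt)
  exact hzO (hzx ▸ hfx)
end

section
/- Let f : X → Y be a function from a topological space X to a Hausdorff space Y. Suppose that for each point x ∈ X there is a subset K_x ⊆ Y such that for each open neighborhood O of f(x) in Y there is a neighborhood U of x with f(U) ⊆ O ∪ K_x and K_x \ O finite. Then f is compact-preserving, i.e., the image of every compact subset of X under f is compact. -/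
open Filter Topology Set

theorem stmt2 {X Y : Type*} [TopologicalSpace X] [TopologicalSpace Y] [T2Space Y]
    (f : X → Y)
    (h : ∀ x : X, ∃ K : Set Y, ∀ O : Set Y, IsOpen O → f x ∈ O →
      ∃ U ∈ 𝓝 x, f '' U ⊆ O ∪ K ∧ (K \ O).Finite) :
    CompactPreserving f := by
  intro C hC
  apply isCompact_of_finite_subcover
  intro ι U hUo hcov
  classical
  rcases C.eq_empty_or_nonempty with rfl | ⟨x₀', hx₀'⟩
  · exact ⟨∅, by simp⟩
  have hne : Nonempty ι := ⟨(mem_iUnion.mp (hcov ⟨x₀', hx₀', rfl⟩)).choose⟩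
  choose K hK using h
  have hsel : ∀ x : X, x ∈ C → ∃ i, ∃ V ∈ 𝓝 x,
      f '' V ⊆ U i ∪ K x ∧ (K x \ U i).Finite ∧ f x ∈ U i := by
    intro x hx
    obtain ⟨i, hi⟩ := mem_iUnion.mp (hcov ⟨x, hx, rfl⟩)
    obtain ⟨V, hV, h1, h2⟩ := hK x (U i) (hUo i) hi
    exact ⟨i, V, hV, h1, h2, hi⟩
  choose! idx V hV hVsub hfin hmem using hsel
  obtain ⟨t, htC, htcov⟩ := hC.elim_nhds_subcover V (fun x hx => hV x hx)
  have hFfin0 : (⋃ x ∈ t, (K x \ U (idx x))).Finite :=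
    t.finite_toSet.biUnion (fun x hx => hfin x (htC x hx))
  set F := (⋃ x ∈ t, (K x \ U (idx x))) ∩ (f '' C) with hFdef
  have hFfin : F.Finite := hFfin0.inter_of_left _
  have hj : ∀ y ∈ F, ∃ i, y ∈ U i := fun y hy => mem_iUnion.mp (hcov hy.2)
  choose! j hjmem using hj
  refine ⟨t.image idx ∪ hFfin.toFinset.image j, ?_⟩
  rintro y ⟨x, hxC, rfl⟩
  obtain ⟨x₀, hx₀t, hxV⟩ := mem_iUnion₂.mp (htcov hxC)
  have hx₀C := htC x₀ hx₀t
  have hmem : f x ∈ U (idx x₀) ∪ K x₀ := hVsub x₀ hx₀C ⟨x, hxV, rfl⟩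
  by_cases h2 : f x ∈ U (idx x₀)
  · exact mem_iUnion₂.mpr ⟨idx x₀,
      Finset.mem_union_left _ (Finset.mem_image_of_mem _ hx₀t), h2⟩
  · have h1 : f x ∈ K x₀ := hmem.resolve_left h2
    have hyF : f x ∈ F :=
      ⟨mem_iUnion₂.mpr ⟨x₀, hx₀t, h1, h2⟩, ⟨x, hxC, rfl⟩⟩
    exact mem_iUnion₂.mpr ⟨j (f x),
      Finset.mem_union_right _
        (Finset.mem_image_of_mem j (hFfin.mem_toFinset.mpr hyF)),
      hjmem _ hyF⟩
end

section
/- A function f : X → Y from a locally connected strong Fréchet space X to a Hausdorff space Y is continuous if and only if f is compact-preserving and has the Darboux property (i.e., images of connected subsets are connected). -/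
open Filter Topology Set

/-!
Suppose `f` is discontinuous at `x`. If `u n → x` with `f (u n)` staying in a set whose closure
misses `f x`, then `f` maps `{x} ∪ {u n | n ≥ N}` onto a compact, hence closed, set for every `N`;
a cluster point of `f ∘ u` lies in all of them, so it is a value `c` taken infinitely often and
`x` lies in the closure of the fibre `f ⁻¹' {c}`. Such values exist outside a closed neighbourhood
`A` of `f x`, and there are infinitely many of them: for a finite set `G` of them, the image of a
connected neighbourhood of `x` meets both `A` and `G`, so by the Darboux property it leaves the
closed set `A ∪ G`; hence `x` is in the closure of `f ⁻¹' (A ∪ G)ᶜ`, which produces a new value.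
Given distinct such values `c₀, c₁, …`, the strong Fréchet property yields `u n → x` with
`f (u n) ∈ {c_k | k ≥ n}`; then no value is taken infinitely often, a contradiction.
-/

section Discontinuity

variable {X Y : Type*} [TopologicalSpace X] [TopologicalSpace Y] {f : X → Y} {x : X}

def Darboux (f : X → Y) : Prop := ∀ C : Set X, IsConnected C → IsConnected (f '' C)

theorem CompactPreserving.exists_frequently_eq_of_tendsto [T2Space Y] (hf : CompactPreserving f)
    {u : ℕ → X} (hu : Tendsto u atTop (𝓝 x)) {S : Set Y} (hS : ∀ n, f (u n) ∈ S)
    (hx : f x ∉ closure S) : ∃ c ∈ S, ∃ᶠ n in atTop, f (u n) = c := by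
  have hK : IsCompact (f '' insert x (range u)) := hf _ hu.isCompact_insert_range
  obtain ⟨c, -, hc⟩ := hK.exists_clusterPt (f := map (f ∘ u) atTop) <|
    le_principal_iff.2 <| mem_map.2 <|
      univ_mem' fun n => mem_image_of_mem f (mem_insert_of_mem x (mem_range_self n))
  have hcS : c ∈ closure S :=
    (hc.mono (le_principal_iff.2 (mem_map.2 (univ_mem' hS)))).mem_closure
  have hfreq : ∃ᶠ n in atTop, f (u n) = c := by
    refine frequently_atTop.2 fun N => ?_
    have hKN : IsCompact (f '' insert x (range fun k => u (k + N))) :=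
      hf _ (hu.comp (tendsto_add_atTop_nat N)).isCompact_insert_range
    have hcK : c ∈ f '' insert x (range fun k => u (k + N)) := by
      refine hKN.isClosed.closure_subset_iff.2 ?_
        (mapClusterPt_atTop_iff_forall_mem_closure.1 hc N)
      rintro _ ⟨n, hn, rfl⟩
      refine mem_image_of_mem f (mem_insert_of_mem x ⟨n - N, ?_⟩)
      simp only [Nat.sub_add_cancel (mem_Ici.1 hn)]
    obtain ⟨y, rfl | ⟨k, rfl⟩, hyc⟩ := hcK
    · exact absurd (hyc ▸ hcS) hx
    · exact ⟨k + N, Nat.le_add_left N k, hyc⟩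
  obtain ⟨n, hn⟩ := hfreq.exists
  exact ⟨c, hn ▸ hS n, hfreq⟩

theorem StrongFrechet.exists_mem_closure_fiber [T2Space Y] (hX : StrongFrechet X)
    (hf : CompactPreserving f) {S : Set Y} (hxS : x ∈ closure (f ⁻¹' S))
    (hx : f x ∉ closure S) : ∃ c ∈ S, x ∈ closure (f ⁻¹' {c}) := by
  obtain ⟨u, hu, hux⟩ := hX (fun _ => f ⁻¹' S) (fun _ => subset_rfl) x (fun _ => hxS)
  obtain ⟨c, hcS, hc⟩ := hf.exists_frequently_eq_of_tendsto hux hu hx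
  exact ⟨c, hcS, mem_closure_of_frequently_of_tendsto hc hux⟩

theorem StrongFrechet.finite_of_forall_mem_closure_fiber [T2Space Y] (hX : StrongFrechet X)
    (hf : CompactPreserving f) {G : Set Y} (hG : ∀ c ∈ G, x ∈ closure (f ⁻¹' {c}))
    (hx : f x ∉ closure G) : G.Finite := by
  refine Set.not_infinite.1 fun hinf => ?_
  set g : ℕ → Y := fun n => hinf.natEmbedding G n
  have hg : Function.Injective g := Subtype.val_injective.comp (hinf.natEmbedding G).injective
  have hgG : ∀ n, g n ∈ G := fun n => (hinf.natEmbedding G n).2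
  obtain ⟨u, hu, hux⟩ := hX (fun n => f ⁻¹' (g '' Ici n))
    (fun n => preimage_mono (image_mono (Ici_subset_Ici.2 n.le_succ))) x
    (fun n => closure_mono (preimage_mono (singleton_subset_iff.2
      (mem_image_of_mem g self_mem_Ici))) (hG _ (hgG n)))
  obtain ⟨_, ⟨i, rfl⟩, hc⟩ := hf.exists_frequently_eq_of_tendsto hux
    (S := range g) (fun n => image_subset_range g _ (hu n))
    (fun h => hx (closure_mono (range_subset_iff.2 hgG) h))
  obtain ⟨n, hn, hni⟩ := (hc.and_eventually (eventually_gt_atTop i)).exists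
  obtain ⟨j, hjn, hj⟩ := hu n
  exact (hni.trans_le hjn).ne' (hg (hj.trans hn))

theorem notMem_closure_of_mem_interior {y : Y} {A S : Set Y} (hy : y ∈ interior A)
    (hS : S ⊆ Aᶜ) : y ∉ closure S := fun h => by
  rw [← notMem_compl_iff, ← closure_compl] at hy
  exact hy (closure_mono hS h)

theorem Darboux.mem_closure_preimage_compl_union [LocallyConnectedSpace X] (hf : Darboux f)
    {A B : Set Y} (hA : IsClosed A) (hB : IsClosed B) (hAB : Disjoint A B) (hxA : f x ∈ A)
    (hxB : x ∈ closure (f ⁻¹' B)) : x ∈ closure (f ⁻¹' (A ∪ B)ᶜ) := by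
  refine mem_closure_iff_nhds.2 fun N hN => ?_
  obtain ⟨W, ⟨hWo, hxW, hWc⟩, hWN⟩ :=
    (LocallyConnectedSpace.open_connected_basis x).mem_iff.1 hN
  by_contra hNAB
  have hfW : f '' W ⊆ A ∪ B := by
    rintro _ ⟨w, hw, rfl⟩
    by_contra h
    exact hNAB ⟨w, hWN hw, h⟩
  obtain ⟨w, hwW, hwB⟩ := mem_closure_iff_nhds.1 hxB W (hWo.mem_nhds hxW)
  obtain ⟨_, -, hA', hB'⟩ := isPreconnected_closed_iff.1 (hf W hWc).isPreconnected A B hA hB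
    hfW ⟨f x, mem_image_of_mem f hxW, hxA⟩ ⟨f w, mem_image_of_mem f hwW, hwB⟩
  exact hAB.ne_of_mem hA' hB' rfl

theorem infinite_setOf_mem_closure_fiber [LocallyConnectedSpace X] [T2Space Y]
    (hX : StrongFrechet X) (hcp : CompactPreserving f) (hd : Darboux f) {A : Set Y}
    (hA : IsClosed A) (hxA : f x ∈ interior A)
    (hne : {c | c ∉ A ∧ x ∈ closure (f ⁻¹' {c})}.Nonempty) :
    {c | c ∉ A ∧ x ∈ closure (f ⁻¹' {c})}.Infinite := by
  set G := {c | c ∉ A ∧ x ∈ closure (f ⁻¹' {c})}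
  intro hG
  obtain ⟨c₀, hc₀⟩ := hne
  have hxG : x ∈ closure (f ⁻¹' G) :=
    closure_mono (preimage_mono (singleton_subset_iff.2 hc₀)) hc₀.2
  obtain ⟨c, hc, hxc⟩ := hX.exists_mem_closure_fiber hcp
    (hd.mem_closure_preimage_compl_union hA hG.isClosed
      (disjoint_right.2 fun _ hc => hc.1) (interior_subset hxA) hxG)
    (notMem_closure_of_mem_interior hxA (compl_subset_compl.2 subset_union_left))
  exact hc (Or.inr ⟨fun h => hc (Or.inl h), hxc⟩)

end Discontinuity

theorem stmt3 {X Y : Type*} [TopologicalSpace X] [TopologicalSpace Y]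
    [LocallyConnectedSpace X] [T2Space Y] (hX : StrongFrechet X) (f : X → Y) :
    Continuous f ↔
      (CompactPreserving f ∧ ∀ C : Set X, IsConnected C → IsConnected (f '' C)) := by
  refine ⟨fun hf => ⟨fun K hK => hK.image hf, fun C hC => hC.image f hf.continuousOn⟩, ?_⟩
  rintro ⟨hcp, hd⟩
  refine continuous_iff_continuousAt.2 fun x => by_contra fun hx => ?_
  obtain ⟨V, ⟨hxV, hV⟩, hfV⟩ : ∃ V, (f x ∈ V ∧ IsOpen V) ∧ ¬∀ᶠ y in 𝓝 x, f y ∈ V := by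
    simpa only [not_forall, exists_prop] using
      (nhds_basis_opens (f x)).tendsto_right_iff.not.1 hx
  obtain ⟨c, hcV, hxc⟩ := hX.exists_mem_closure_fiber hcp (S := Vᶜ)
    (mem_closure_iff_frequently.2 (not_eventually.1 hfV))
    (by rwa [hV.isClosed_compl.closure_eq, notMem_compl_iff])
  obtain ⟨U, O, hU, hO, hxU, hcO, hUO⟩ := t2_separation (ne_of_mem_of_not_mem hxV hcV)
  have hG := infinite_setOf_mem_closure_fiber hX hcp hd isClosed_closure
    (hU.subset_interior_closure hxU) ⟨c, (hUO.closure_left hO).notMem_of_mem_right hcO, hxc⟩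
  exact hG (hX.finite_of_forall_mem_closure_fiber hcp (fun c hc => hc.2)
    (notMem_closure_of_mem_interior (hU.subset_interior_closure hxU) fun c hc => hc.1))
end

section
/- Let f : X → Y be a compact-preserving function from a topological space X to a Hausdorff space Y. If (x_n) is a sequence in X converging to a point x ∈ X such that the values f(x_n) are pairwise distinct (f(x_n) ≠ f(x_m) for n ≠ m), then the sequence (f(x_n)) converges to f(x). -/
/-!
Suppose `f (u n)` stays outside a neighbourhood `V` of `f x` along a subsequence `v` of `u`.
The compact set `f({x} ∪ {v n})` is infinite, yet each of its points has a neighbourhood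
containing only finitely many of its points: `V` for `f x`, and for `f (v k)` the complement of
the image of `{x} ∪ {v j | j > k}`, which is compact, hence closed since `Y` is Hausdorff, and
misses `f (v k)` because the values are pairwise distinct.
-/

open Filter Topology Set

theorem IsCompact.finite_of_forall_exists_inter_finite {Y : Type*} [TopologicalSpace Y]
    {s : Set Y} (hs : IsCompact s) (h : ∀ y ∈ s, ∃ U ∈ 𝓝 y, (U ∩ s).Finite) : s.Finite := by
  choose! U hU hUs using h
  obtain ⟨t, hts, hcover⟩ := hs.elim_nhds_subcover U hU
  refine ((t.finite_toSet.biUnion fun y hy => hUs y (hts y hy))).subset fun z hz => ?_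
  obtain ⟨y, hy, hzy⟩ := mem_iUnion₂.mp (hcover hz)
  exact mem_biUnion hy ⟨hzy, hz⟩

theorem image_insert_range_subset_union_tail {X Y : Type*} (f : X → Y) (v : ℕ → X) (x : X)
    (k : ℕ) :
    f '' insert x (range v) ⊆
      f '' insert x (range fun j => v (j + (k + 1))) ∪ (f ∘ v) '' Iic k := by
  rintro _ ⟨w, rfl | ⟨n, rfl⟩, rfl⟩
  · exact .inl (mem_image_of_mem f (mem_insert w _))
  rcases le_or_gt n k with hnk | hkn
  · exact .inr ⟨n, hnk, rfl⟩
  · refine .inl ⟨v n, mem_insert_of_mem x ⟨n - (k + 1), ?_⟩, rfl⟩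
    simp only [Nat.sub_add_cancel hkn]

section CompactPreserving

variable {X Y : Type*} [TopologicalSpace X] [TopologicalSpace Y] {f : X → Y}

theorem CompactPreserving.isCompact_image_insert_range (hf : CompactPreserving f) {v : ℕ → X}
    {x : X} (hv : Tendsto v atTop (𝓝 x)) : IsCompact (f '' insert x (range v)) :=
  hf _ hv.isCompact_insert_range

theorem CompactPreserving.compl_image_tail_mem_nhds [T2Space Y] (hf : CompactPreserving f)
    {v : ℕ → X} {x : X} (hv : Tendsto v atTop (𝓝 x)) (hinj : (f ∘ v).Injective) {k : ℕ}
    (hk : f (v k) ≠ f x) :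
    (f '' insert x (range fun j => v (j + (k + 1))))ᶜ ∈ 𝓝 (f (v k)) := by
  refine ((hf.isCompact_image_insert_range
    ((tendsto_add_atTop_iff_nat (k + 1)).2 hv)).isClosed.isOpen_compl.mem_nhds ?_)
  rintro ⟨z, rfl | ⟨j, rfl⟩, hz⟩
  · exact hk hz.symm
  · have := hinj hz
    omega

theorem CompactPreserving.exists_apply_mem_of_tendsto [T2Space Y] (hf : CompactPreserving f)
    {v : ℕ → X} {x : X} (hv : Tendsto v atTop (𝓝 x)) (hinj : (f ∘ v).Injective)
    {V : Set Y} (hV : V ∈ 𝓝 (f x)) : ∃ n, f (v n) ∈ V := by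
  by_contra! hvV
  set S := f '' insert x (range v)
  have hS_infinite : S.Infinite :=
    (infinite_range_of_injective hinj).mono (range_comp f v ▸ image_mono (subset_insert x _))
  refine hS_infinite
    (hf.isCompact_image_insert_range hv |>.finite_of_forall_exists_inter_finite ?_)
  rintro _ ⟨z, rfl | ⟨k, rfl⟩, rfl⟩
  · refine ⟨V, hV, (finite_singleton (f z)).subset ?_⟩
    rintro _ ⟨hyV, w, rfl | ⟨n, rfl⟩, rfl⟩
    exacts [rfl, absurd hyV (hvV n)]
  · have hk : f (v k) ≠ f x := fun h => hvV k (h ▸ mem_of_mem_nhds hV)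
    refine ⟨_, hf.compl_image_tail_mem_nhds hv hinj hk, ((finite_Iic k).image (f ∘ v)).subset ?_⟩
    exact fun _ hy => (image_insert_range_subset_union_tail f v x k hy.2).resolve_left hy.1

end CompactPreserving

theorem stmt4 {X Y : Type*} [TopologicalSpace X] [TopologicalSpace Y] [T2Space Y]
    (f : X → Y) (hf : CompactPreserving f) (u : ℕ → X) (x : X)
    (hu : Filter.Tendsto u Filter.atTop (𝓝 x))
    (hinj : ∀ n m : ℕ, n ≠ m → f (u n) ≠ f (u m)) :
    Filter.Tendsto (fun n => f (u n)) Filter.atTop (𝓝 (f x)) := by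
  rw [(nhds_basis_opens (f x)).tendsto_right_iff]
  by_contra! hcon
  obtain ⟨V, ⟨hxV, hV⟩, hfreq⟩ := hcon
  obtain ⟨φ, hφ, hφV⟩ := extraction_of_frequently_atTop hfreq
  have hinjφ : (f ∘ u ∘ φ).Injective := fun a b hab =>
    of_not_not fun hab' => hinj _ _ (hφ.injective.ne hab') hab
  obtain ⟨n, hn⟩ := hf.exists_apply_mem_of_tendsto (hu.comp hφ.tendsto_atTop) hinjφ
    (hV.mem_nhds hxV)
  exact hφV n hn
end

section
/- Let f : X → Y be a compact-preserving function from a Fréchet space X to a Hausdorff space Y. Let SI_f denote the set of points x ∈ X at which f is sequentially infinite, i.e., there exists a sequence (x_n) converging to x whose image {f(x_n) : n ∈ ℕ} is infinite. Then the restriction of f to the subspace SI_f is continuous. -/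
/-!
If `t n → x` and `f ∘ t` is injective, then `f (t n) → f x`: the images of the tails
`{x} ∪ {t n | n ≥ m}` are a decreasing family of compact sets with intersection `{f x}`.
So if `f` restricted to `SI_f` is discontinuous at `x`, Fréchetness gives `u n → x` in `SI_f`
whose values form a finite set, separated from `f x` by an open `W`. Each `u k` is the limit of
a sequence with distinct values in `W`, and these sequences can be chosen with all values
distinct, so `f` is injective on their union `B`, whose closure contains `x`. Only finitely
many points of each sequence specialize to `x` (infinitely many would converge to `x` with
distinct values in `W`); once they are discarded, a sequence in `B` converging to `x` takes
infinitely many values, so its images converge to `f x ∉ closure W`, which is absurd.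
-/

open Filter Topology Set

/-- The set of points at which `f` is sequentially infinite. -/
def SIset {X Y : Type*} [TopologicalSpace X] (f : X → Y) : Set X :=
  {x | ∃ u : ℕ → X, Filter.Tendsto u Filter.atTop (𝓝 x) ∧ (Set.range (fun n => f (u n))).Infinite}

open Function

theorem exists_injective_comp_forall_mem {α Y : Type*} (g : α → Y) {A : ℕ → Set α}
    (hA : ∀ m, (g '' A m).Infinite) : ∃ a : ℕ → α, Injective (g ∘ a) ∧ ∀ m, a m ∈ A m := by
  classical
  have hfresh : ∀ m (F : Finset Y), ∃ z ∈ A m, g z ∉ F := fun m F => by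
    obtain ⟨_, ⟨z, hz, rfl⟩, hzF⟩ := (hA m).exists_notMem_finset F
    exact ⟨z, hz, hzF⟩
  choose pick hpick hpickF using hfresh
  -- `F m` is the set of the first `m` chosen values
  let F : ℕ → Finset Y := fun m => Nat.rec ∅ (fun m F => insert (g (pick m F)) F) m
  have hpick_mem : ∀ {i m}, i < m → g (pick i (F i)) ∈ F m := by
    intro i m h
    induction h with
    | refl => exact Finset.mem_insert_self _ _
    | step _ ih => exact Finset.mem_insert_of_mem ih
  refine ⟨fun m => pick m (F m), Injective.of_lt_imp_ne fun i m h heq => ?_,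
    fun m => hpick m (F m)⟩
  exact hpickF m (F m) ((show g (pick i (F i)) = g (pick m (F m)) from heq) ▸ hpick_mem h)

theorem exists_injective_comp_of_infinite_range {Y : Type*} {g : ℕ → Y}
    (h : (range g).Infinite) : ∃ φ : ℕ → ℕ, Injective (g ∘ φ) := by
  have hA : ∀ _ : ℕ, (g '' univ).Infinite := fun _ => by rwa [image_univ]
  simpa only [mem_univ, forall_const, and_true] using exists_injective_comp_forall_mem g hA

theorem exists_specializes_of_mem_closure {X : Type*} [TopologicalSpace X] {S : Set X}
    (hS : S.Finite) {x : X} (hx : x ∈ closure S) : ∃ z ∈ S, z ⤳ x := by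
  rw [← S.biUnion_of_singleton, hS.closure_biUnion] at hx
  simpa only [mem_iUnion₂, specializes_iff_mem_closure, exists_prop] using hx

theorem exists_seq_tendsto_infinite_range {X : Type*} [TopologicalSpace X]
    [FrechetUrysohnSpace X] {B : Set X} {x : X} (hx : x ∈ closure B) (hB : ∀ z ∈ B, ¬z ⤳ x) :
    ∃ c : ℕ → X, (∀ n, c n ∈ B) ∧ Tendsto c atTop (𝓝 x) ∧ (range c).Infinite := by
  obtain ⟨c, hcB, hc⟩ := mem_closure_iff_seq_limit.1 hx
  refine ⟨c, hcB, hc, fun hfin => ?_⟩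
  obtain ⟨_, ⟨n, rfl⟩, hn⟩ := exists_specializes_of_mem_closure hfin
    (mem_closure_of_tendsto hc (Eventually.of_forall mem_range_self))
  exact hB _ (hcB n) hn

namespace CompactPreserving

variable {X Y : Type*} [TopologicalSpace X] [TopologicalSpace Y] [T2Space Y] {f : X → Y}

theorem tendsto_of_injective (hf : CompactPreserving f) {t : ℕ → X} {x : X}
    (ht : Tendsto t atTop (𝓝 x)) (hinj : Injective (f ∘ t)) :
    Tendsto (f ∘ t) atTop (𝓝 (f x)) := by
  set K : ℕ → Set Y := fun m => f '' insert x (range fun n => t (n + m))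
  have hK : ∀ m, IsCompact (K m) := fun m =>
    hf _ (ht.comp (tendsto_add_atTop_nat m)).isCompact_insert_range
  have hanti : Antitone K := by
    refine fun m m' hm => image_mono (insert_subset_insert ?_)
    rintro _ ⟨n, rfl⟩
    exact ⟨n + (m' - m), by simp only [add_assoc, Nat.sub_add_cancel hm]⟩
  have hinter : ⋂ m, K m ⊆ {f x} := by
    intro y hy
    simp only [mem_iInter, K, image_insert_eq, mem_insert_iff, ← range_comp, mem_range] at hy
    rcases hy 0 with h | ⟨n, rfl⟩
    · exact h
    rcases hy (n + 1) with h | ⟨k, hk⟩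
    · exact h
    · exact absurd (hinj hk) (by omega)
  rw [(nhds_basis_opens (f x)).tendsto_right_iff]
  rintro V ⟨hxV, hV⟩
  obtain ⟨m, hm⟩ := exists_subset_nhds_of_isCompact hanti.directed_ge hK
    fun y hy => hV.mem_nhds (by rw [hinter hy]; exact hxV)
  filter_upwards [eventually_ge_atTop m] with n hn
  exact hm ⟨t n, mem_insert_of_mem _ ⟨n - m, by simp only [Nat.sub_add_cancel hn]⟩, rfl⟩

theorem exists_injective_tendsto (hf : CompactPreserving f) {u : ℕ → X} {x : X}
    (hu : Tendsto u atTop (𝓝 x)) (hinf : (range (f ∘ u)).Infinite) :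
    ∃ φ : ℕ → ℕ, Injective (f ∘ u ∘ φ) ∧ Tendsto (f ∘ u ∘ φ) atTop (𝓝 (f x)) := by
  obtain ⟨φ, hφ⟩ := exists_injective_comp_of_infinite_range hinf
  have hφ_tendsto : Tendsto (u ∘ φ) atTop (𝓝 x) := hu.comp (hφ.of_comp).nat_tendsto_atTop
  exact ⟨φ, hφ, hf.tendsto_of_injective hφ_tendsto hφ⟩

theorem finite_range_of_forall_notMem (hf : CompactPreserving f) {u : ℕ → X} {x : X}
    (hu : Tendsto u atTop (𝓝 x)) {V : Set Y} (hV : V ∈ 𝓝 (f x)) (huV : ∀ n, f (u n) ∉ V) :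
    (range (f ∘ u)).Finite := by
  by_contra hinf
  obtain ⟨φ, -, hφ⟩ := hf.exists_injective_tendsto hu hinf
  obtain ⟨n, hn⟩ := (hφ.eventually hV).exists
  exact huV (φ n) hn

theorem exists_seq_of_mem_SIset (hf : CompactPreserving f) {x : X} (hx : x ∈ SIset f)
    {W : Set Y} (hW : W ∈ 𝓝 (f x)) :
    ∃ v : ℕ → X, Tendsto v atTop (𝓝 x) ∧ Injective (f ∘ v) ∧ ∀ j, f (v j) ∈ W := by
  obtain ⟨u, hu, hinf⟩ := hx
  obtain ⟨φ, hφ, hφ_tendsto⟩ := hf.exists_injective_tendsto hu hinf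
  obtain ⟨J, hJ⟩ := eventually_atTop.1 (hφ_tendsto.eventually hW)
  have hv : Tendsto (u ∘ φ) atTop (𝓝 x) := hu.comp hφ.of_comp.of_comp.nat_tendsto_atTop
  exact ⟨fun j => u (φ (j + J)), hv.comp (tendsto_add_atTop_nat J),
    hφ.comp (add_left_injective J), fun j => hJ _ (Nat.le_add_left J j)⟩

theorem exists_injective_family_tendsto (hf : CompactPreserving f) {w : ℕ → X}
    (hw : ∀ k, w k ∈ SIset f) {W : Set Y} (hW : IsOpen W) (hwW : ∀ k, f (w k) ∈ W) :
    ∃ b : ℕ × ℕ → X, Injective (f ∘ b) ∧ (∀ kj, f (b kj) ∈ W) ∧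
      ∀ k, Tendsto (fun j => b (k, j)) atTop (𝓝 (w k)) := by
  choose p hp_tendsto hp_inj hpW using
    fun k => hf.exists_seq_of_mem_SIset (hw k) (hW.mem_nhds (hwW k))
  let e := Nat.pairEquiv
  have hA : ∀ m, (f '' (p (e.symm m).1 '' Ici (e.symm m).2)).Infinite := fun m => by
    rw [image_image]
    exact (Ici_infinite _).image (hp_inj _).injOn
  obtain ⟨a, ha_inj, ha_mem⟩ := exists_injective_comp_forall_mem f hA
  have hmem : ∀ k j, a (e (k, j)) ∈ p k '' Ici j := fun k j => by
    simpa only [Equiv.symm_apply_apply] using ha_mem (e (k, j))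
  refine ⟨a ∘ e, ha_inj.comp e.injective, fun ⟨k, j⟩ => ?_, fun k => ?_⟩
  · obtain ⟨i, -, hi⟩ := hmem k j
    simpa only [comp_apply, ← hi] using hpW k i
  · choose i hi hpi using hmem k
    simp only [comp_apply, ← hpi]
    exact (hp_tendsto k).comp (tendsto_atTop_mono hi tendsto_id)

theorem apply_mem_closure_of_tendsto [FrechetUrysohnSpace X] (hf : CompactPreserving f)
    {x : X} {w : ℕ → X} (hw : Tendsto w atTop (𝓝 x)) (hwSI : ∀ k, w k ∈ SIset f) {W : Set Y}
    (hW : IsOpen W) (hwW : ∀ k, f (w k) ∈ W) : f x ∈ closure W := by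
  by_contra hx
  have hfin : ∀ s : ℕ → X, Tendsto s atTop (𝓝 x) → (∀ n, f (s n) ∈ W) →
      (range (f ∘ s)).Finite := fun s hs hsW =>
    hf.finite_range_of_forall_notMem hs (isClosed_closure.isOpen_compl.mem_nhds hx)
      fun n hn => hn (subset_closure (hsW n))
  obtain ⟨b, hb_inj, hbW, hb_tendsto⟩ := hf.exists_injective_family_tendsto hwSI hW hwW
  have hrow : ∀ k, ∀ᶠ j in atTop, ¬b (k, j) ⤳ x := by
    intro k
    by_contra h
    obtain ⟨ψ, hψ, hψx⟩ :=
      extraction_of_frequently_atTop ((not_eventually.1 h).mono fun _ => not_not.1)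
    have hs : Tendsto (fun n => b (k, ψ n)) atTop (𝓝 x) := tendsto_nhds.2 fun U hU hxU =>
      Eventually.of_forall fun n => (hψx n).mem_open hU hxU
    have hs_inj : Injective (f ∘ fun n => b (k, ψ n)) :=
      hb_inj.comp ((Prod.mk_right_injective k).comp hψ.injective)
    exact infinite_range_of_injective hs_inj (hfin _ hs fun n => hbW _)
  set B := range b \ {z | z ⤳ x}
  have hxB : x ∈ closure B := isClosed_closure.mem_of_tendsto hw <| Eventually.of_forall fun k =>
    mem_closure_of_tendsto (hb_tendsto k) ((hrow k).mono fun j hj => ⟨mem_range_self _, hj⟩)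
  obtain ⟨c, hcB, hc, hc_inf⟩ := exists_seq_tendsto_infinite_range hxB fun z hz => hz.2
  have hcW : ∀ n, f (c n) ∈ W := fun n => by
    obtain ⟨kj, hkj⟩ := (hcB n).1
    exact hkj ▸ hbW kj
  refine (hc_inf.image (hb_inj.injOn_range.mono ?_)) (range_comp f c ▸ hfin c hc hcW)
  rintro _ ⟨n, rfl⟩
  exact (hcB n).1

end CompactPreserving

theorem stmt5 {X Y : Type*} [TopologicalSpace X] [TopologicalSpace Y]
    [FrechetUrysohnSpace X] [T2Space Y] (f : X → Y) (hf : CompactPreserving f) :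
    Continuous (Set.restrict (SIset f) f) := by
  refine continuousOn_iff_continuous_domRestrict.1 fun x hx =>
    (nhds_basis_opens (f x)).tendsto_right_iff.2 fun V ⟨hxV, hV⟩ => ?_
  by_contra hnot
  have hx_cl : x ∈ closure (SIset f ∩ f ⁻¹' Vᶜ) := by
    rw [mem_closure_iff_frequently]
    simpa only [frequently_nhdsWithin_iff, and_comm, mem_inter_iff, mem_preimage,
      mem_compl_iff] using not_eventually.1 hnot
  obtain ⟨u, hu, hux⟩ := mem_closure_iff_seq_limit.1 hx_cl
  have hfin := hf.finite_range_of_forall_notMem hux (hV.mem_nhds hxV) fun n => (hu n).2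
  have hfx : Disjoint (range (f ∘ u)) {f x} := by
    rw [disjoint_singleton_right]
    rintro ⟨n, hn⟩
    exact (hu n).2 (by rwa [← hn] at hxV)
  obtain ⟨W, V', hW, hV', hFW, hxV', hWV'⟩ :=
    SeparatedNhds.of_isCompact_isCompact hfin.isCompact isCompact_singleton hfx
  have hx_W := hf.apply_mem_closure_of_tendsto hux (fun n => (hu n).1) hW
    fun n => hFW (mem_range_self n)
  exact disjoint_left.1 (hWV'.closure_left hV') hx_W (hxV' rfl)
end

section
/- Let f : X → Y be a compact-preserving function from a Fréchet space X in which convergent sequences have unique limits, to a Hausdorff space Y. Then the set SI_f of points at which f is sequentially infinite is closed in X. -/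
open Filter Topology Set

/-- Convergent sequences have unique limits. -/
def SeqHausdorff (X : Type*) [TopologicalSpace X] : Prop :=
  ∀ (u : ℕ → X) (a b : X), Filter.Tendsto u Filter.atTop (𝓝 a) →
    Filter.Tendsto u Filter.atTop (𝓝 b) → a = b

/-!
Let `x` be a limit of points `xₙ ∈ SI_f`, witnessed by sequences `vₙ → xₙ` whose `f`-values
are pairwise distinct. Dropping finitely many terms from each `vₙ` (those whose value is `f x`
or one of the values `f (vₘ j)` with `m, j < n`) leaves a set `P` with `x ∉ P` on which every
fibre of `f` is finite, yet `x ∈ closure P`. A sequence in `P` converging to `x` then visits each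
point only finitely often, since a constant subsequence would converge both to that point and to
`x`; so it has infinite range, and by finiteness of the fibres so does its image under `f`.
-/

lemma exists_tendsto_atTop_injective_comp_of_infinite_range {Y : Type*} {g : ℕ → Y}
    (h : (range g).Infinite) : ∃ φ : ℕ → ℕ, Tendsto φ atTop atTop ∧ (g ∘ φ).Injective := by
  let e := h.natEmbedding
  choose φ hφ using fun j => (e j).2
  have hinj : (g ∘ φ).Injective := fun j j' hjj' =>
    e.injective (Subtype.ext ((hφ j).symm.trans (hjj'.trans (hφ j'))))
  refine ⟨φ, ?_, hinj⟩
  rw [← Nat.cofinite_eq_atTop]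
  exact (Function.Injective.of_comp hinj).tendsto_cofinite

lemma exists_finite_fibers_eventually_mem {X Y : Type*} (f : X → Y) (v : ℕ → ℕ → X)
    (hv : ∀ n, (f ∘ v n).Injective) (x : X) :
    ∃ P : Set X, x ∉ P ∧ (∀ y, (P ∩ f ⁻¹' {y}).Finite) ∧ ∀ n, ∀ᶠ j in atTop, v n j ∈ P := by
  let F : ℕ → Set Y := fun n => insert (f x) (image2 (fun m j => f (v m j)) (Iio n) (Iio n))
  have hF : ∀ n, (F n).Finite := fun n =>
    ((finite_Iio n).image2 _ (finite_Iio n)).insert _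
  refine ⟨{p | ∃ n j, v n j = p ∧ f (v n j) ∉ F n}, ?_, ?_, ?_⟩
  · rintro ⟨n, j, rfl, hj⟩
    exact hj (mem_insert _ _)
  · intro y
    rcases ({p | ∃ n j, v n j = p ∧ f (v n j) ∉ F n} ∩ f ⁻¹' {y}).eq_empty_or_nonempty
      with hempty | ⟨-, ⟨m, j, rfl, -⟩, hmj⟩
    · rw [hempty]
      exact finite_empty
    -- `y = f (v m j)` lies in `F n` for every `n > max m j`, so only columns `n ≤ max m j` meet this fibre
    have hcolumn : ∀ n, ({j' | f (v n j') = y}).Subsingleton := fun n _ h₁ _ h₂ =>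
      hv n (h₁.trans h₂.symm)
    refine ((finite_Iic (max m j)).biUnion fun n _ =>
      ((hcolumn n).finite.image (v n))).subset ?_
    rintro - ⟨⟨n, j', rfl, hj'⟩, hy⟩
    have hn : n ≤ max m j := by
      by_contra! hlt
      exact hj' (mem_insert_of_mem _ ⟨m, lt_of_le_of_lt (le_max_left _ _) hlt,
        j, lt_of_le_of_lt (le_max_right _ _) hlt, hmj.trans hy.symm⟩)
    exact mem_biUnion hn ⟨j', hy, rfl⟩
  · intro n
    rw [← Nat.cofinite_eq_atTop]
    filter_upwards [((hF n).preimage (hv n).injOn).eventually_cofinite_notMem] with j hj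
    exact ⟨n, j, rfl, hj⟩

section SeqHausdorff

variable {X : Type*} [TopologicalSpace X]

lemma SeqHausdorff.finite_setOf_eq (hX : SeqHausdorff X) {u : ℕ → X} {x p : X}
    (hu : Tendsto u atTop (𝓝 x)) (hp : p ≠ x) : {n | u n = p}.Finite := by
  by_contra hinf
  obtain ⟨φ, hφ, hφp⟩ := extraction_of_frequently_atTop
    (Nat.frequently_atTop_iff_infinite.mpr hinf)
  have hconst : Tendsto (u ∘ φ) atTop (𝓝 p) := by
    rw [show u ∘ φ = fun _ => p from funext hφp]
    exact tendsto_const_nhds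
  exact hp (hX _ p x hconst (hu.comp hφ.tendsto_atTop))

lemma SeqHausdorff.infinite_range (hX : SeqHausdorff X) {u : ℕ → X} {x : X}
    (hu : Tendsto u atTop (𝓝 x)) (hux : ∀ n, u n ≠ x) : (range u).Infinite := by
  intro hfin
  have huniv : (u ⁻¹' range u).Finite := hfin.preimage' fun _ ⟨n, hn⟩ =>
    hX.finite_setOf_eq hu (hn ▸ hux n)
  rw [preimage_range] at huniv
  exact infinite_univ huniv

lemma SeqHausdorff.mem_SIset_of_mem_closure [FrechetUrysohnSpace X] (hX : SeqHausdorff X)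
    {Y : Type*} {f : X → Y} {P : Set X} {x : X} (hxP : x ∈ closure P) (hx : x ∉ P)
    (hfib : ∀ y, (P ∩ f ⁻¹' {y}).Finite) : x ∈ SIset f := by
  obtain ⟨t, htP, ht⟩ := mem_closure_iff_seq_limit.mp hxP
  have hrange : (range t).Infinite :=
    hX.infinite_range ht fun n hn => hx (hn ▸ htP n)
  refine ⟨t, ht, fun hfin => hrange (Finite.of_finite_fibers f ?_ fun y _ => ?_)⟩
  · rwa [← range_comp]
  · exact (hfib y).subset (inter_subset_inter_left _ (range_subset_iff.mpr htP))

end SeqHausdorff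

theorem stmt6_general {X Y : Type*} [TopologicalSpace X] [TopologicalSpace Y]
    [FrechetUrysohnSpace X] (hX : SeqHausdorff X)
    (f : X → Y) :
    IsClosed (SIset f) := by
  refine isClosed_of_closure_subset fun x hx => ?_
  obtain ⟨xs, hxs, hlim⟩ := mem_closure_iff_seq_limit.mp hx
  choose u hu hinf using hxs
  choose φ hφ hinj using fun n => exists_tendsto_atTop_injective_comp_of_infinite_range (hinf n)
  obtain ⟨P, hxP, hfib, hev⟩ := exists_finite_fibers_eventually_mem f (fun n => u n ∘ φ n) hinj x
  have hxsP : ∀ n, xs n ∈ closure P := fun n =>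
    mem_closure_of_tendsto ((hu n).comp (hφ n)) (hev n)
  exact hX.mem_SIset_of_mem_closure
    (isClosed_closure.mem_of_tendsto hlim (Eventually.of_forall hxsP)) hxP hfib

theorem stmt6 {X Y : Type*} [TopologicalSpace X] [TopologicalSpace Y]
    [FrechetUrysohnSpace X] [T2Space Y] (hX : SeqHausdorff X)
    (f : X → Y) (hf : CompactPreserving f) :
    IsClosed (SIset f) :=
  stmt6_general hX f
end

section
/- Let f : X → Y be a compact-preserving function from a sequentially Hausdorff Fréchet space X to a Hausdorff space Y. Let LI_f be the set of points at which f is locally infinite (i.e., f has infinite image on every neighborhood of the point), let LI'_f be the set of non-isolated points of LI_f, and let SI_f be the set of points at which f is sequentially infinite. Then LI'_f ⊆ SI_f ⊆ LI_f. -/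
open Filter Topology Set

/-- The set of points at which `f` is locally infinite. -/
def LIset {X Y : Type*} [TopologicalSpace X] (f : X → Y) : Set X :=
  {x | ∀ U ∈ 𝓝 x, (f '' U).Infinite}

/-- The set of non-isolated points of `LIset f` (in the subspace `LIset f`). -/
def LIset' {X Y : Type*} [TopologicalSpace X] (f : X → Y) : Set X :=
  {x ∈ LIset f | x ∈ closure (LIset f \ {x})}

/-- Injective maps `ℕ → ℕ` tend to `atTop`. -/
private lemma injt {j : ℕ → ℕ} (hj : Function.Injective j) : Tendsto j atTop atTop := by
  rw [← Nat.cofinite_eq_atTop]; exact hj.tendsto_cofinite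

/-- Pigeonhole: an infinite set with finite image has an infinite fiber. -/
private lemma ph {α : Type*} {J : Set ℕ} {g : ℕ → α} (hJ : J.Infinite)
    (hfin : (g '' J).Finite) : ∃ b, {j | j ∈ J ∧ g j = b}.Infinite := by
  by_contra hc
  push_neg at hc
  apply hJ
  have hsub : J ⊆ ⋃ b ∈ g '' J, {j | j ∈ J ∧ g j = b} := fun j hj =>
    Set.mem_biUnion (Set.mem_image_of_mem g hj) ⟨hj, rfl⟩
  exact (hfin.biUnion fun b _ => hc b).subset hsub

/-- Selection of an injective-image subfamily from a set with infinite image. -/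
private lemma sel1 {α : Type*} {J : Set ℕ} {g : ℕ → α} (h : (g '' J).Infinite) :
    ∃ j : ℕ → ℕ, (∀ i, j i ∈ J) ∧ Function.Injective (g ∘ j) := by
  have q := Set.Infinite.natEmbedding _ h
  have hq : ∀ i, ((q i : α) ∈ g '' J) := fun i => (q i).2
  choose j hjJ hgj using hq
  refine ⟨j, hjJ, fun a b hab => ?_⟩
  have : (q a : α) = (q b : α) := by
    rw [← hgj a, ← hgj b]; exact hab
  exact q.injective (Subtype.coe_injective this)

/-- Selection of an injective sequence inside an infinite subset of `ℕ`. -/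
private lemma sel2 {J : Set ℕ} (h : J.Infinite) :
    ∃ j : ℕ → ℕ, (∀ i, j i ∈ J) ∧ Function.Injective j := by
  have q := Set.Infinite.natEmbedding _ h
  exact ⟨fun i => (q i : ℕ), fun i => (q i).2, fun a b hab =>
    q.injective (Subtype.coe_injective hab)⟩

/-- At a point of local infinity, Fréchet-ness gives a "spoke": a sequence converging to the
point, avoiding any finite set of values, and either injective-valued or constant-valued. -/
private lemma spoke_exists {X Y : Type*} [TopologicalSpace X] [FrechetUrysohnSpace X]
    (f : X → Y) {p : X} (hp : p ∈ LIset f) (G : Set Y) (hG : G.Finite) :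
    ∃ t : ℕ → X, Tendsto t atTop (𝓝 p) ∧ (∀ k, f (t k) ∉ G) ∧
      (Function.Injective (fun k => f (t k)) ∨ ∀ k k', f (t k) = f (t k')) := by
  classical
  have hp' : ∀ U ∈ 𝓝 p, (f '' U).Infinite := hp
  have hcl : p ∈ closure {z | f z ∉ G} := by
    rw [mem_closure_iff]
    intro o ho hpo
    by_contra hemp
    refine hp' o (ho.mem_nhds hpo) (hG.subset ?_)
    rintro _ ⟨z, hz, rfl⟩
    by_contra hfz
    exact hemp ⟨z, hz, hfz⟩
  obtain ⟨s, hs, hslim⟩ := mem_closure_iff_seq_limit.1 hcl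
  by_cases hfin : (Set.range fun k => f (s k)).Finite
  · obtain ⟨y, hy⟩ := ph (g := fun k => f (s k)) Set.infinite_univ (by rwa [Set.image_univ])
    obtain ⟨j, hjm, hjinj⟩ := sel2 hy
    refine ⟨fun i => s (j i), hslim.comp (injt hjinj), fun k => hs (j k), Or.inr ?_⟩
    intro k k'
    have h1 : f (s (j k)) = y := (hjm k).2
    have h2 : f (s (j k')) = y := (hjm k').2
    rw [h1, h2]
  · obtain ⟨j, hjm, hjinj⟩ := sel1 (J := Set.univ) (g := fun k => f (s k))
      (by rwa [Set.image_univ])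
    exact ⟨fun i => s (j i), hslim.comp (injt hjinj.of_comp), fun k => hs (j k), Or.inl hjinj⟩

/-- Accumulating finite sets of values along the spokes. -/
private def GpAux {Y : Type*} (F : Set Y) (hF : F.Finite)
    (g : ℕ → (S : Set Y) → S.Finite → Y) : ℕ → {S : Set Y // S.Finite}
  | 0 => ⟨F, hF⟩
  | n + 1 =>
      ⟨insert (g n (GpAux F hF g n).1 (GpAux F hF g n).2) (GpAux F hF g n).1,
        (GpAux F hF g n).2.insert _⟩

private lemma GpAux_mono {Y : Type*} (F : Set Y) (hF : F.Finite)
    (g : ℕ → (S : Set Y) → S.Finite → Y) {m n : ℕ} (h : m ≤ n) :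
    (GpAux F hF g m).1 ⊆ (GpAux F hF g n).1 := by
  induction n, h using Nat.le_induction with
  | base => exact fun _ hy => hy
  | succ n hmn ih =>
      refine ih.trans ?_
      intro y hy
      show y ∈ insert (g n (GpAux F hF g n).1 (GpAux F hF g n).2) (GpAux F hF g n).1
      exact Set.mem_insert_iff.2 (Or.inr hy)

theorem stmt7 {X Y : Type*} [TopologicalSpace X] [TopologicalSpace Y]
    [FrechetUrysohnSpace X] [T2Space Y] (hX : SeqHausdorff X)
    (f : X → Y) (hf : CompactPreserving f) :
    LIset' f ⊆ SIset f ∧ SIset f ⊆ LIset f := by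
  classical
  constructor
  · -- LIset' ⊆ SIset
    intro x hx
    simp only [LIset', Set.mem_setOf_eq] at hx
    obtain ⟨hxLI, hxcl⟩ := hx
    by_contra hSI
    have hfin : ∀ u : ℕ → X, Tendsto u atTop (𝓝 x) →
        (Set.range fun n => f (u n)).Finite := by
      intro u hu
      by_contra h
      exact hSI ⟨u, hu, h⟩
    obtain ⟨xs, hxs, hxslim⟩ := mem_closure_iff_seq_limit.1 hxcl
    set F : Set Y := insert (f x) (Set.range fun n => f (xs n)) with hFdef
    have hF : F.Finite := (hfin xs hxslim).insert _
    -- construct the spokes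
    obtain ⟨t, ht1, ht2, ht3, ht4⟩ :
        ∃ t : ℕ → ℕ → X,
          (∀ n, Tendsto (t n) atTop (𝓝 (xs n))) ∧
          (∀ n k, f (t n k) ∉ F) ∧
          (∀ n, Function.Injective (fun k => f (t n k)) ∨ ∀ k k', f (t n k) = f (t n k')) ∧
          (∀ m n, m < n → (∀ a b, f (t m a) = f (t m b)) →
            ∀ k k', f (t n k) ≠ f (t m k')) := by
      choose T hT1 hT2 hT3 using
        fun n (G : Set Y) (hG : G.Finite) => spoke_exists f (hxs n).1 G hG
      set g : ℕ → (S : Set Y) → S.Finite → Y := fun m S hS => f (T m S hS 0) with hgdef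
      refine ⟨fun n => T n (GpAux F hF g n).1 (GpAux F hF g n).2,
        fun n => hT1 n _ _, fun n k hk => ?_, fun n => hT3 n _ _, ?_⟩
      · exact hT2 n _ _ k (GpAux_mono F hF g (Nat.zero_le n) hk)
      · intro m n hmn hconst k k' heq
        have h0 : f (T m (GpAux F hF g m).1 (GpAux F hF g m).2 0)
            ∈ (GpAux F hF g (m+1)).1 := Set.mem_insert _ _
        have h1 : f (T m (GpAux F hF g m).1 (GpAux F hF g m).2 k')
            ∈ (GpAux F hF g n).1 := by
          rw [hconst k' 0]
          exact GpAux_mono F hF g (Nat.succ_le_of_lt hmn) h0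
        have h2 : f (T n (GpAux F hF g n).1 (GpAux F hF g n).2 k)
            ∈ (GpAux F hF g n).1 := by rw [heq]; exact h1
        exact hT2 n _ _ k h2
    -- diagonalization over the (countably many) spoke values
    have hVc : (⋃ n, Set.range fun k => f (t n k)).Countable :=
      Set.countable_iUnion fun n => Set.countable_range _
    obtain ⟨e, he⟩ := hVc.exists_eq_range ⟨f (t 0 0), Set.mem_iUnion.2 ⟨0, ⟨0, rfl⟩⟩⟩
    obtain ⟨φ, hφ⟩ :
        ∃ φ : ℕ → ℕ, ∀ y ∈ ⋃ n, Set.range fun k => f (t n k), ∃ r : ℕ, ∀ N, r ≤ N →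
          Function.Injective (fun k => f (t N k)) → ∀ k, f (t N k) = y → k < φ N := by
      refine ⟨fun n => ((Finset.range (n+1)).sup fun r =>
        if h : ∃ k, f (t n k) = e r then Nat.find h else 0) + 1, ?_⟩
      intro y hy
      obtain ⟨r, hr⟩ : ∃ r, e r = y := by rw [he] at hy; exact hy
      refine ⟨r, fun N hrN hinj k hk => ?_⟩
      have hex : ∃ k', f (t N k') = e r := ⟨k, by rw [hr]; exact hk⟩
      have h1 : (if h : ∃ k', f (t N k') = e r then Nat.find h else 0) = k := by
        rw [dif_pos hex]
        refine hinj ?_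
        show f (t N (Nat.find hex)) = f (t N k)
        rw [Nat.find_spec hex, hr, ← hk]
      have h2 : (if h : ∃ k', f (t N k') = e r then Nat.find h else 0) ≤
          (Finset.range (N+1)).sup
            (fun r => if h : ∃ k, f (t N k) = e r then Nat.find h else 0) :=
        Finset.le_sup (f := fun r => if h : ∃ k, f (t N k) = e r then Nat.find h else 0)
          (Finset.mem_range.2 (Nat.lt_succ_of_le hrN))
      rw [← h1]
      exact Nat.lt_succ_of_le h2
    -- x is in the closure of the high parts of the spokes
    have hxA : x ∈ closure {z : X | ∃ n k, φ n ≤ k ∧ z = t n k} := by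
      rw [mem_closure_iff]
      intro o ho hxo
      obtain ⟨n, hn⟩ := eventually_atTop.1 ((Filter.tendsto_def.mp hxslim) o (ho.mem_nhds hxo))
      have hno : xs n ∈ o := hn n le_rfl
      obtain ⟨k0, hk0⟩ := eventually_atTop.1 ((Filter.tendsto_def.mp (ht1 n)) o (ho.mem_nhds hno))
      exact ⟨t n (max k0 (φ n)), hk0 _ (le_max_left _ _),
        ⟨n, max k0 (φ n), le_max_right _ _, rfl⟩⟩
    obtain ⟨w, hwA, hwlim⟩ := mem_closure_iff_seq_limit.1 hxA
    simp only [Set.mem_setOf_eq] at hwA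
    choose nn kk hkk1 hkk2 using hwA
    have hwfin := hfin w hwlim
    obtain ⟨y, hy⟩ := ph (g := fun j => f (w j)) Set.infinite_univ (by rwa [Set.image_univ])
    have hJ : {j : ℕ | f (w j) = y}.Infinite := hy.mono fun j hj => hj.2
    obtain ⟨j0, hj0⟩ := hJ.nonempty
    have hj0' : f (w j0) = y := hj0
    have hyF : y ∉ F := by
      rw [← hj0', hkk2 j0]
      exact ht2 (nn j0) (kk j0)
    by_cases hB : (nn '' {j : ℕ | f (w j) = y}).Finite
    · -- case A: infinitely many of the y-points lie on a single spoke N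
      obtain ⟨N, hNinf⟩ := ph hJ hB
      by_cases hk : (kk '' {j | j ∈ {j : ℕ | f (w j) = y} ∧ nn j = N}).Finite
      · -- finitely many heights: infinitely many j's give the same point p, so p = x ∈ f⁻¹ y
        have hsub : (fun j => w j) '' {j | j ∈ {j : ℕ | f (w j) = y} ∧ nn j = N} ⊆
            (fun k => t N k) '' (kk '' {j | j ∈ {j : ℕ | f (w j) = y} ∧ nn j = N}) := by
          rintro _ ⟨j1, hj1, rfl⟩
          refine ⟨kk j1, ⟨j1, hj1, rfl⟩, ?_⟩
          show t N (kk j1) = w j1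
          rw [hkk2 j1, hj1.2]
        have hpfin : ((fun j => w j) '' {j | j ∈ {j : ℕ | f (w j) = y} ∧ nn j = N}).Finite :=
          (hk.image _).subset hsub
        obtain ⟨p, hpinf⟩ := ph hNinf hpfin
        obtain ⟨j, hjm, hjinj⟩ := sel2 hpinf
        have hconv : Tendsto (fun i => w (j i)) atTop (𝓝 x) := hwlim.comp (injt hjinj)
        have heqc : (fun i => w (j i)) = fun _ => p := funext fun i => (hjm i).2
        rw [heqc] at hconv
        have hpx : p = x := hX (fun _ => p) p x tendsto_const_nhds hconv
        have h5 : f (w (j 0)) = y := (hjm 0).1.1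
        have h6 : w (j 0) = p := (hjm 0).2
        apply hyF
        rw [← h5, h6, hpx, hFdef]
        exact Set.mem_insert _ _
      · -- infinitely many heights: a subsequence converges to both x and xs N
        obtain ⟨j, hjm, hkinj⟩ := sel1 (g := kk) hk
        have hjinj : Function.Injective j := hkinj.of_comp
        have h1 : Tendsto (fun i => w (j i)) atTop (𝓝 x) := hwlim.comp (injt hjinj)
        have heq : (fun i => w (j i)) = fun i => t N (kk (j i)) :=
          funext fun i => by rw [hkk2 (j i), (hjm i).2]
        have h2 : Tendsto (fun i => t N (kk (j i))) atTop (𝓝 (xs N)) :=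
          (ht1 N).comp (injt hkinj)
        rw [heq] at h1
        have hxxs := hX _ x (xs N) h1 h2
        exact (hxs N).2 (by rw [← hxxs]; exact Set.mem_singleton _)
    · -- case B: y occurs on infinitely many spokes, above the diagonal — impossible
      have hBi : (nn '' {j : ℕ | f (w j) = y}).Infinite := hB
      obtain ⟨rr, hrr⟩ := hφ y (by
        rw [← hj0', hkk2 j0]
        exact Set.mem_iUnion.2 ⟨nn j0, ⟨kk j0, rfl⟩⟩)
      have hgen : ∀ N, rr ≤ N → N ∈ nn '' {j : ℕ | f (w j) = y} →
          Function.Injective (fun k => f (t N k)) → False := by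
        intro N hrN hNmem hinj
        obtain ⟨jj, hjjJ, hjjN⟩ := hNmem
        have hval : f (t N (kk jj)) = y := by
          rw [← hjjN, ← hkk2 jj]; exact hjjJ
        have hlt := hrr N hrN hinj (kk jj) hval
        have h7 := hkk1 jj
        rw [hjjN] at h7
        omega
      have hS := hBi.diff (Set.finite_Iio rr)
      obtain ⟨N1, hN1⟩ := hS.nonempty
      obtain ⟨N2, hN2⟩ := (hS.diff (Set.finite_singleton N1)).nonempty
      have hN1r : rr ≤ N1 := not_lt.1 fun h => hN1.2 h
      have hN2r : rr ≤ N2 := not_lt.1 fun h => hN2.1.2 h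
      have hne : N2 ≠ N1 := fun h => hN2.2 (by rw [h]; exact Set.mem_singleton _)
      rcases ht3 N1 with hi1 | hc1
      · exact hgen N1 hN1r hN1.1 hi1
      rcases ht3 N2 with hi2 | hc2
      · exact hgen N2 hN2r hN2.1.1 hi2
      -- both spokes constant with value y : contradicts value-freshness
      obtain ⟨j1, hj1J, hj1N⟩ := hN1.1
      obtain ⟨j2, hj2J, hj2N⟩ := hN2.1.1
      have hv1 : f (t N1 (kk j1)) = y := by rw [← hj1N, ← hkk2 j1]; exact hj1J
      have hv2 : f (t N2 (kk j2)) = y := by rw [← hj2N, ← hkk2 j2]; exact hj2J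
      rcases lt_or_gt_of_ne hne with hlt | hgt
      · exact ht4 N2 N1 hlt hc2 (kk j1) (kk j2) (by rw [hv1, hv2])
      · exact ht4 N1 N2 hgt hc1 (kk j2) (kk j1) (by rw [hv1, hv2])
  · -- SIset ⊆ LIset
    rintro x ⟨u, hu, hinf⟩
    intro U hU
    by_contra hfin
    rw [Set.not_infinite] at hfin
    obtain ⟨N, hN⟩ := eventually_atTop.1 ((Filter.tendsto_def.mp hu) U hU)
    apply hinf
    have hsub : (Set.range fun n => f (u n)) ⊆ f '' U ∪ (fun n => f (u n)) '' Set.Iio N := by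
      rintro _ ⟨n, rfl⟩
      rcases lt_or_ge n N with h | h
      · exact Or.inr ⟨n, h, rfl⟩
      · exact Or.inl ⟨u n, hN n h, rfl⟩
    exact (hfin.union ((Set.finite_Iio N).image _)).subset hsub
end

section
/- Let f : X → Y be a compact-preserving function from a sequentially Hausdorff strong Fréchet space X to a Hausdorff space Y. Then SI_f = LI_f, i.e., f is sequentially infinite at a point x if and only if f is locally infinite at x. -/
open Filter Topology Set

lemma exists_const_fiber_infinite {Y : Type*} {g : ℕ → Y}
    (h : (Set.range g).Finite) : ∃ y, {n | g n = y}.Infinite := by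
  haveI := h.to_subtype
  obtain ⟨y, hy⟩ := Finite.exists_infinite_fiber (fun n => (⟨g n, Set.mem_range_self n⟩ :
    Set.range g))
  refine ⟨(y : Y), ?_⟩
  rw [← Set.infinite_coe_iff]
  have : {n | g n = (y : Y)} = (fun n => (⟨g n, Set.mem_range_self n⟩ : Set.range g)) ⁻¹' {y} := by
    ext n; simp [Subtype.ext_iff]
  rw [this]
  exact Set.infinite_coe_iff.mpr (Set.infinite_coe_iff.mp hy)

theorem stmt8 {X Y : Type*} [TopologicalSpace X] [TopologicalSpace Y] [T2Space Y]
    (hX1 : SeqHausdorff X) (hX2 : StrongFrechet X)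
    (f : X → Y) (hf : CompactPreserving f) :
    SIset f = LIset f := by
  ext x
  simp only [SIset, LIset, Set.mem_setOf_eq]
  constructor
  · rintro ⟨u, hu, hinf⟩ U hU
    have hmem : u ⁻¹' U ∈ atTop := hu hU
    obtain ⟨N, hN⟩ := Filter.eventually_atTop.mp hmem
    by_contra hfin
    rw [Set.not_infinite] at hfin
    have hsub : Set.range (fun n => f (u n)) ⊆ (f '' U) ∪ ((fun n => f (u n)) '' Set.Iio N) := by
      rintro _ ⟨n, rfl⟩
      rcases le_or_gt N n with h | h
      · exact Or.inl ⟨u n, hN n h, rfl⟩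
      · exact Or.inr ⟨n, h, rfl⟩
    exact hinf (Set.Finite.subset (hfin.union ((Set.finite_Iio N).image _)) hsub)
  · intro hx
    set D : Set Y := {y | x ∈ closure (f ⁻¹' {y})} with hD
    by_cases hDi : D.Infinite
    · -- infinitely many "cluster values": diagonalize
      let e : ℕ ↪ D := hDi.natEmbedding
      set A : ℕ → Set X := fun n => ⋃ k ∈ Set.Ici n, f ⁻¹' {((e k : D) : Y)} with hA
      have hdec : ∀ n, A (n + 1) ⊆ A n := by
        intro n
        apply Set.biUnion_subset_biUnion_left
        exact fun k hk => le_trans (Nat.le_succ n) hk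
      have hcl : ∀ n, x ∈ closure (A n) := by
        intro n
        have h1 : f ⁻¹' {((e n : D) : Y)} ⊆ A n := by
          intro z hz
          exact Set.mem_biUnion (le_refl n) hz
        exact closure_mono h1 (e n).2
      obtain ⟨v, hvA, hv⟩ := hX2 A hdec x hcl
      refine ⟨v, hv, ?_⟩
      have hk : ∀ n, ∃ k, n ≤ k ∧ f (v n) = ((e k : D) : Y) := by
        intro n
        have := hvA n
        simp only [hA, Set.mem_iUnion, Set.mem_preimage, Set.mem_singleton_iff,
          Set.mem_Ici, exists_prop] at this
        exact this
      choose k hk1 hk2 using hk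
      intro hfin
      -- range (f ∘ v) finite ⇒ range k finite, contradiction with k n ≥ n
      have hsub : (fun m => ((e m : D) : Y)) '' Set.range k ⊆ Set.range (fun n => f (v n)) := by
        rintro _ ⟨m, ⟨n, rfl⟩, rfl⟩
        exact ⟨n, (hk2 n : f (v n) = _)⟩
      have hinj : Function.Injective (fun m => ((e m : D) : Y)) := by
        intro a b hab
        exact e.injective (Subtype.ext hab)
      have hkfin : (Set.range k).Finite :=
        Set.Finite.of_finite_image (hfin.subset hsub) hinj.injOn
      obtain ⟨M, hM⟩ := hkfin.bddAbove
      have := hM (Set.mem_range_self (M + 1))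
      have := hk1 (M + 1)
      omega
    · -- D finite
      have hDf : D.Finite := Set.not_infinite.mp hDi
      have hcl : x ∈ closure (f ⁻¹' Dᶜ) := by
        rw [mem_closure_iff]
        intro O hO hxO
        have hinf : (f '' O).Infinite := hx O (hO.mem_nhds hxO)
        obtain ⟨y, hyO, hyD⟩ := (hinf.diff hDf).nonempty
        obtain ⟨z, hzO, rfl⟩ := hyO
        exact ⟨z, hzO, hyD⟩
      obtain ⟨v, hvA, hv⟩ := hX2 (fun _ => f ⁻¹' Dᶜ) (fun _ => subset_rfl) x (fun _ => hcl)
      refine ⟨v, hv, ?_⟩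
      intro hfin
      obtain ⟨y, hy⟩ := exists_const_fiber_infinite hfin
      -- build constant-value subsequence
      have hmem : ∀ n, (Nat.nth (fun n => f (v n) = y) n) ∈ {n | f (v n) = y} :=
        Nat.nth_mem_of_infinite hy
      have hmono : StrictMono (Nat.nth (fun n => f (v n) = y)) := Nat.nth_strictMono hy
      have htend : Filter.Tendsto (fun n => v (Nat.nth (fun n => f (v n) = y) n))
          Filter.atTop (𝓝 x) := hv.comp hmono.tendsto_atTop
      have hyD : y ∈ D := by
        refine mem_closure_of_tendsto htend ?_
        refine Filter.Eventually.of_forall fun n => ?_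
        exact hmem n
      have : f (v (Nat.nth (fun n => f (v n) = y) 0)) ∈ Dᶜ :=
        hvA (Nat.nth (fun n => f (v n) = y) 0)
      rw [hmem 0] at this
      exact this hyD
end

section
/- Let f : X → Y be a compact-preserving function from a sequentially Hausdorff Fréchet space X to a Hausdorff space Y. Then the restriction of f to LI'_f, the set of non-isolated points of the set LI_f of points of local infinity of f, is continuous. -/
open Filter Topology Set

/-!
An `f`-injective sequence `u → p` has `f ∘ u → f p`: a cluster value of `f ∘ u` lies in every
closed set `f '' insert p (range (u ∘ (· + N)))`, and injectivity leaves only `f p`. Passing to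
subsequences, it remains to show `f x = y` when points of `LI'_f` with `f`-value `y` tend to `x`.

Call `q` a rich limit of `O ⊆ Y` if `q` lies in the closure of `f ⁻¹' (O \ F)` for every finite
`F`. Rich limits of a set `O` with `f p ∉ closure O` do not accumulate at `p`: choose sequences
towards them greedily, so that each value is taken by only finitely many of them, and take a
sequence towards `p` drawn from their union. Its `f`-values lie in `O`, so by the first step
they take some value infinitely often; hence infinitely many of its terms come from a single
chosen sequence, whose limit is then `p` by sequential Hausdorffness. As every point of `LI_f` is
a rich limit of `O` or of `Oᶜ`, each point `p` of `LI'_f` is an accumulation point of rich limits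
of any neighbourhood `O` of `f p`. Taking `W ∋ y` with `f x ∉ closure W`, this makes `x` an
accumulation point of rich limits of `W`, which is impossible if `y ≠ f x`.
-/
theorem exists_strictMono_const_or_injective {α : Type*} (g : ℕ → α) :
    ∃ φ : ℕ → ℕ, StrictMono φ ∧ ((∀ n, g (φ n) = g (φ 0)) ∨ Function.Injective (g ∘ φ)) := by
  obtain ⟨φ, hconst | hne⟩ := exists_increasing_or_nonincreasing_subseq (· = ·) g
  · refine ⟨φ, φ.strictMono, Or.inl fun n => ?_⟩
    rcases n.eq_zero_or_pos with rfl | hn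
    exacts [rfl, (hconst 0 n hn).symm]
  · exact ⟨φ, φ.strictMono, Or.inr (Function.Injective.of_lt_imp_ne hne)⟩

theorem exists_seqs_finite_setOf_apply_eq {β γ : Type*} (f : β → γ) (P : ℕ → (ℕ → β) → Prop)
    (h : ∀ i (F : Finset γ), ∃ u, P i u ∧ ∀ k, f (u k) ∉ F) :
    ∃ (ι : ℕ → ℕ) (u : ℕ → ℕ → β), StrictMono ι ∧ (∀ n, P (ι n) (u n)) ∧
      ∀ c, {n | ∃ k, f (u n k) = c}.Finite := by
  classical
  -- The `n`-th sequence avoids the first `ι n` values of every earlier one.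
  obtain ⟨g, hgP, hg⟩ := exists_seq_of_forall_finset_exists (fun x : ℕ × (ℕ → β) => P x.1 x.2)
    (fun x y => x.1 < y.1 ∧ ∀ k < y.1, ∀ l, f (y.2 l) ≠ f (x.2 k)) fun s _ => by
      set i := s.sup Prod.fst + 1
      obtain ⟨u, hPu, hu⟩ := h i (s.biUnion fun x => (Finset.range i).image (f ∘ x.2))
      refine ⟨(i, u), hPu, fun x hx => ⟨Nat.lt_succ_of_le (Finset.le_sup hx), fun k hk l hl => ?_⟩⟩
      exact hu l <| Finset.mem_biUnion.2
        ⟨x, hx, Finset.mem_image.2 ⟨k, Finset.mem_range.2 hk, hl.symm⟩⟩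
  have hmono : StrictMono fun n => (g n).1 := fun m n hmn => (hg m n hmn).1
  refine ⟨fun n => (g n).1, fun n => (g n).2, hmono, hgP, fun c => ?_⟩
  by_cases hc : ∃ m k, f ((g m).2 k) = c
  · obtain ⟨m, k, rfl⟩ := hc
    refine (Set.finite_Iic (max m k)).subset fun n ⟨l, hl⟩ => ?_
    by_contra hn
    have hkn : k < (g n).1 :=
      (lt_of_le_of_lt (le_max_right m k) (not_le.1 hn)).trans_le (hmono.id_le n)
    exact (hg m n (lt_of_le_of_lt (le_max_left m k) (not_le.1 hn))).2 k hkn l hl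
  · exact Set.finite_empty.subset fun n ⟨k, hk⟩ => hc ⟨n, k, hk⟩

section

variable {X Y : Type*} [TopologicalSpace X]

theorem closure_diff_singleton_subset [T1Space X] (s : Set X) (x : X) :
    closure s \ {x} ⊆ closure (s \ {x}) := by
  simpa only [sdiff_eq, inter_comm] using isOpen_compl_singleton.inter_closure (t := s) (s := {x}ᶜ)

theorem SeqHausdorff.t1Space (hX : SeqHausdorff X) : T1Space X :=
  t1Space_iff_specializes_imp_eq.2 fun x y h =>
    hX _ x y tendsto_const_nhds (tendsto_const_nhds.mono_right h)

theorem SeqHausdorff.eq_of_tendsto_of_forall_mem_range (hX : SeqHausdorff X) {u w : ℕ → X}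
    {z p : X} (hu : Tendsto u atTop (𝓝 z)) (hw : Tendsto w atTop (𝓝 p))
    (hwu : ∀ m, w m ∈ range u) (hwp : ∀ m, w m ≠ p) : z = p := by
  choose k hk using hwu
  obtain ⟨φ, hφ, hconst | hinj⟩ := exists_strictMono_const_or_injective k
  · have hc : Tendsto (fun _ : ℕ => w (φ 0)) atTop (𝓝 p) :=
      (hw.comp hφ.tendsto_atTop).congr fun n => by simp only [Function.comp_apply, ← hk, hconst n]
    exact absurd (hX _ _ _ tendsto_const_nhds hc) (hwp _)
  · have hz : Tendsto (w ∘ φ) atTop (𝓝 z) := by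
      simpa only [Function.comp_def, hk] using hu.comp hinj.nat_tendsto_atTop
    exact hX _ _ _ hz (hw.comp hφ.tendsto_atTop)

theorem mem_closure_preimage_compl_of_mem_LIset {f : X → Y} {q : X} (hq : q ∈ LIset f)
    (F : Finset Y) : q ∈ closure (f ⁻¹' (↑F)ᶜ) := by
  refine mem_closure_iff_nhds.2 fun t ht => ?_
  obtain ⟨_, ⟨z, hz, rfl⟩, hzF⟩ := ((hq t ht).sdiff F.finite_toSet).nonempty
  exact ⟨z, hz, hzF⟩

-- For `O = univ` these are exactly the points of `LIset f`.
def richLimits (f : X → Y) (O : Set Y) : Set X :=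
  {q | ∀ F : Finset Y, q ∈ closure (f ⁻¹' (O \ F))}

theorem LIset_subset_richLimits_union_compl (f : X → Y) (O : Set Y) :
    LIset f ⊆ richLimits f O ∪ richLimits f Oᶜ := by
  classical
  intro q hq
  refine or_iff_not_imp_left.2 fun hqO F => ?_
  obtain ⟨F₀, hF₀⟩ := not_forall.1 hqO
  have hsub : f ⁻¹' (↑(F ∪ F₀))ᶜ ⊆ f ⁻¹' (O \ F₀) ∪ f ⁻¹' (Oᶜ \ F) := by
    intro z hz
    simp only [Finset.coe_union, mem_preimage, mem_compl_iff, mem_union, Set.mem_sdiff,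
      Finset.mem_coe] at hz ⊢
    tauto
  have hq' := closure_mono hsub (mem_closure_preimage_compl_of_mem_LIset hq (F ∪ F₀))
  rw [closure_union] at hq'
  exact hq'.resolve_left hF₀

variable [TopologicalSpace Y] [T2Space Y]

theorem CompactPreserving.tendsto_of_injective_s9 {f : X → Y}
    (hf : CompactPreserving f) {u : ℕ → X} {p : X} (hu : Tendsto u atTop (𝓝 p))
    (hinj : Function.Injective (f ∘ u)) : Tendsto (f ∘ u) atTop (𝓝 (f p)) := by
  have htail : ∀ N, IsClosed (f '' insert p (range fun k => u (k + N))) := fun N =>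
    (hf _ (hu.comp (tendsto_add_atTop_nat N)).isCompact_insert_range).isClosed
  refine (hf _ hu.isCompact_insert_range).tendsto_nhds_of_unique_mapClusterPt
    (Eventually.of_forall fun k => mem_image_of_mem f (mem_insert_of_mem _ (mem_range_self k)))
    fun c _ hc => ?_
  have hmem : ∀ N, c = f p ∨ ∃ k, f (u (k + N)) = c := fun N => by
    obtain ⟨z, hz, rfl⟩ := (htail N).mem_of_mapClusterPt hc <|
      (eventually_ge_atTop N).mono fun k hk =>
        ⟨u k, mem_insert_of_mem _ ⟨k - N, show u (k - N + N) = u k by rw [Nat.sub_add_cancel hk]⟩,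
          rfl⟩
    rcases hz with rfl | ⟨k, rfl⟩
    exacts [Or.inl rfl, Or.inr ⟨k, rfl⟩]
  obtain h | ⟨k₀, rfl⟩ := hmem 0
  · exact h
  obtain h | ⟨k, hk⟩ := hmem (k₀ + 1)
  · exact h
  exact absurd (hinj hk) (by omega)

variable [FrechetUrysohnSpace X]

theorem notMem_closure_iUnion_range (hX : SeqHausdorff X) {f : X → Y} (hf : CompactPreserving f)
    {O : Set Y} {p : X} (hO : f p ∉ closure O) {u : ℕ → ℕ → X} {z : ℕ → X}
    (hu : ∀ n, Tendsto (u n) atTop (𝓝 (z n))) (hz : ∀ n, z n ≠ p)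
    (huO : ∀ n k, f (u n k) ∈ O) (hfin : ∀ c, {n | ∃ k, f (u n k) = c}.Finite) :
    p ∉ closure (⋃ n, range (u n)) := by
  intro hp
  obtain ⟨v, hvu, hv⟩ := mem_closure_iff_seq_limit.1 hp
  choose n k hnk using fun m => mem_iUnion.1 (hvu m)
  have hvO : ∀ m, f (v m) ∈ O := fun m => hnk m ▸ huO _ _
  obtain ⟨φ, hφ, hconst | hinj⟩ := exists_strictMono_const_or_injective (f ∘ v)
  · obtain ⟨ψ, hψ, hn₀ | hninj⟩ := exists_strictMono_const_or_injective (n ∘ φ)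
    · refine hz _ (hX.eq_of_tendsto_of_forall_mem_range (hu (n (φ (ψ 0))))
        (hv.comp (hφ.comp hψ).tendsto_atTop) (fun m => ?_)
        fun m h => hO (subset_closure (h ▸ hvO _)))
      have hm : n (φ (ψ m)) = n (φ (ψ 0)) := hn₀ m
      exact ⟨k (φ (ψ m)), hm ▸ hnk (φ (ψ m))⟩
    · refine Set.infinite_range_of_injective hninj ((hfin (f (v (φ 0)))).subset ?_)
      rintro _ ⟨m, rfl⟩
      exact ⟨k (φ (ψ m)), by simpa only [Function.comp_apply, hnk] using hconst (ψ m)⟩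
  · exact hO (mem_closure_of_tendsto (hf.tendsto_of_injective_s9 (hv.comp hφ.tendsto_atTop) hinj)
      (Eventually.of_forall fun m => hvO _))

theorem notMem_closure_richLimits_diff_self (hX : SeqHausdorff X) {f : X → Y}
    (hf : CompactPreserving f) {O : Set Y} {p : X} (hO : f p ∉ closure O) :
    p ∉ closure (richLimits f O \ {p}) := by
  intro hp
  obtain ⟨z, hzR, hz⟩ := mem_closure_iff_seq_limit.1 hp
  obtain ⟨ι, u, hι, hu, hfin⟩ := exists_seqs_finite_setOf_apply_eq f
    (fun i w => Tendsto w atTop (𝓝 (z i)) ∧ ∀ k, f (w k) ∈ O) fun i F => by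
      obtain ⟨w, hwF, hw⟩ := mem_closure_iff_seq_limit.1 ((hzR i).1 F)
      exact ⟨w, ⟨hw, fun k => (hwF k).1⟩, fun k => (hwF k).2⟩
  refine notMem_closure_iUnion_range hX hf hO (fun n => (hu n).1) (fun n => (hzR (ι n)).2)
    (fun n => (hu n).2) hfin (isClosed_closure.mem_of_tendsto (hz.comp hι.tendsto_atTop)
      (Eventually.of_forall fun n => ?_))
  exact closure_mono (subset_iUnion (fun n => range (u n)) n)
    (mem_closure_of_tendsto (hu n).1 (Eventually.of_forall mem_range_self))

theorem mem_closure_richLimits_diff_self (hX : SeqHausdorff X) {f : X → Y}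
    (hf : CompactPreserving f) {p : X} (hp : p ∈ LIset' f) {O : Set Y} (hO : O ∈ 𝓝 (f p)) :
    p ∈ closure (richLimits f O \ {p}) := by
  have hsplit : LIset f \ {p} ⊆ (richLimits f O \ {p}) ∪ (richLimits f Oᶜ \ {p}) := by
    rw [← union_sdiff_distrib]
    exact sdiff_subset_sdiff_left (LIset_subset_richLimits_union_compl f O)
  have hp' := closure_mono hsplit hp.2
  rw [closure_union] at hp'
  refine hp'.resolve_right (notMem_closure_richLimits_diff_self hX hf ?_)
  rwa [closure_compl, mem_compl_iff, not_not, mem_interior_iff_mem_nhds]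

theorem apply_eq_of_tendsto_of_forall_mem_LIset' (hX : SeqHausdorff X) {f : X → Y}
    (hf : CompactPreserving f) {s : ℕ → X} {x : X} {y : Y} (hs : Tendsto s atTop (𝓝 x))
    (hsL : ∀ n, s n ∈ LIset' f) (hsy : ∀ n, f (s n) = y) : f x = y := by
  by_contra hne
  have := hX.t1Space
  obtain ⟨V, W, hV, hW, hxV, hyW, hVW⟩ := t2_separation hne
  have hsW : ∀ n, s n ∈ closure (richLimits f W \ {x}) := fun n => by
    have hsn := mem_closure_richLimits_diff_self hX hf (hsL n)
      (by rw [hsy n]; exact hW.mem_nhds hyW)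
    exact closure_diff_singleton_subset _ _
      ⟨closure_mono sdiff_subset hsn, fun h => hne (h ▸ hsy n)⟩
  refine notMem_closure_richLimits_diff_self hX hf
    (fun h => (hVW.closure_right hV).notMem_of_mem_left hxV h) ?_
  rw [← closure_closure]
  exact mem_closure_of_tendsto hs (Eventually.of_forall hsW)

theorem tendsto_comp_of_forall_mem_LIset' (hX : SeqHausdorff X) {f : X → Y}
    (hf : CompactPreserving f) {s : ℕ → X} {x : X} (hs : Tendsto s atTop (𝓝 x))
    (hsL : ∀ n, s n ∈ LIset' f) : Tendsto (f ∘ s) atTop (𝓝 (f x)) := by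
  refine tendsto_of_subseq_tendsto fun ns hns => ?_
  obtain ⟨φ, hφ, hconst | hinj⟩ := exists_strictMono_const_or_injective (f ∘ s ∘ ns)
  · refine ⟨φ, ?_⟩
    rw [apply_eq_of_tendsto_of_forall_mem_LIset' hX hf (hs.comp (hns.comp hφ.tendsto_atTop))
      (fun m => hsL _) hconst]
    exact tendsto_const_nhds.congr fun m => (hconst m).symm
  · exact ⟨φ, hf.tendsto_of_injective_s9 (hs.comp (hns.comp hφ.tendsto_atTop)) hinj⟩

end

theorem stmt9 {X Y : Type*} [TopologicalSpace X] [TopologicalSpace Y]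
    [FrechetUrysohnSpace X] [T2Space Y] (hX : SeqHausdorff X)
    (f : X → Y) (hf : CompactPreserving f) :
    Continuous (Set.restrict (LIset' f) f) :=
  SeqContinuous.continuous fun s _ hs =>
    tendsto_comp_of_forall_mem_LIset' hX hf (tendsto_subtype_rng.1 hs) fun n => (s n).2
end

section
/- Let f : X → Y be a compact-preserving function from a Fréchet space X to a Hausdorff T₁-space Y, and let x ∈ X. If f[x] = {f(x)}, where f[x] = {y ∈ Y : x ∈ closure(f⁻¹(y))}, then f is continuous at x. -/
open Filter Topology Set

/-!
Suppose `f` is not continuous at `x`: some open `V ∋ f x` has `x ∈ closure (f ⁻¹' Vᶜ)`, so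
(Fréchet) a sequence `uₙ → x` has `f uₙ ∉ V`. Since `{x} ∪ {uₙ}` is compact, so is its image,
and `f ∘ u` has a cluster point `y ∉ V`. Applying compact-preservation once more to `{x}` together
with the terms where `f uₙ ≠ y`, whose image is closed and misses `y`, shows that `f uₙ = y` for
infinitely many `n`. Then `x ∈ closure (f ⁻¹' {y})`, i.e. `y ∈ f[x] = {f x}`, although `y ≠ f x`.
-/

section

variable {ι X Y : Type*} [TopologicalSpace X] [TopologicalSpace Y]

theorem Filter.Tendsto.isCompact_insert_image {u : ι → X} {x : X}
    (hu : Tendsto u cofinite (𝓝 x)) (T : Set ι) : IsCompact (insert x (u '' T)) := by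
  rw [image_eq_range]
  exact (hu.comp Subtype.val_injective.tendsto_cofinite).isCompact_insert_range_of_cofinite

theorem CompactPreserving.frequently_eq_of_mapClusterPt_s12 [T2Space Y] {f : X → Y}
    (hf : CompactPreserving f) {u : ι → X} {x : X} (hu : Tendsto u cofinite (𝓝 x)) {y : Y}
    (hy : MapClusterPt y cofinite (f ∘ u)) (hyx : y ≠ f x) :
    ∃ᶠ i in cofinite, f (u i) = y := by
  set K := insert x (u '' {i | f (u i) ≠ y})
  have hfK : IsClosed (f '' K) := (hf K (hu.isCompact_insert_image _)).isClosed
  have hy_notMem : y ∉ f '' K := by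
    rintro ⟨z, rfl | ⟨i, hi, rfl⟩, hzy⟩
    exacts [hyx hzy.symm, hi hzy]
  refine (hy.frequently (hfK.isOpen_compl.mem_nhds hy_notMem)).mono fun i hi => ?_
  by_contra hne
  exact hi ⟨u i, mem_insert_of_mem _ (mem_image_of_mem u hne), rfl⟩

end

theorem stmt12_general {X Y : Type*} [TopologicalSpace X] [TopologicalSpace Y]
    [FrechetUrysohnSpace X] [T2Space Y]
    (f : X → Y) (hf : CompactPreserving f) (x : X)
    (h : oscSet f x = {f x}) : ContinuousAt f x := by
  rw [ContinuousAt, tendsto_nhds]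
  intro V hV hfxV
  by_contra hxV
  have hx : x ∈ closure (f ⁻¹' Vᶜ) := by
    rwa [preimage_compl, closure_compl, mem_compl_iff, mem_interior_iff_mem_nhds]
  obtain ⟨u, huV, hux⟩ := mem_closure_iff_seq_limit.mp hx
  rw [← Nat.cofinite_eq_atTop] at hux
  have hK : IsCompact (f '' insert x (range u) ∩ Vᶜ) :=
    (hf _ hux.isCompact_insert_range_of_cofinite).inter_right hV.isClosed_compl
  have hfuK : ∃ᶠ n in cofinite, f (u n) ∈ f '' insert x (range u) ∩ Vᶜ :=
    .of_forall fun n => ⟨mem_image_of_mem f (mem_insert_of_mem x (mem_range_self n)), huV n⟩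
  obtain ⟨y, ⟨-, hyV⟩, hy⟩ := hK.exists_mapClusterPt_of_frequently hfuK
  have hyx : y ≠ f x := fun hyx => hyV (hyx ▸ hfxV)
  have hyosc : y ∈ oscSet f x :=
    mem_closure_of_frequently_of_tendsto (hf.frequently_eq_of_mapClusterPt_s12 hux hy hyx) hux
  rw [h] at hyosc
  exact hyx hyosc

theorem stmt12 {X Y : Type*} [TopologicalSpace X] [TopologicalSpace Y]
    [FrechetUrysohnSpace X] [T2Space Y] [T1Space Y]
    (f : X → Y) (hf : CompactPreserving f) (x : X)
    (h : oscSet f x = {f x}) : ContinuousAt f x :=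
  stmt12_general f hf x h
end

section
/- There exists a countable Hausdorff topological space X (the Arhangelskii–Franklin space X = ⋃_n ℕ^n, where a set U is a neighborhood of a finite sequence s iff s ∈ U and U contains s⌢m for all but finitely many m ∈ ℕ) and a compact-preserving function f : X → ℝ that is locally infinite and discontinuous at every point of X. -/
/-!
Every compact set of the Arhangelskii–Franklin space meets only finitely many levels `ℕ^n`:
a set containing at most one sequence of each length is closed and discrete, so it is finite
once it lies in a compact set. On the other hand `s ++ [m] → s`, so every neighbourhood of `s`
meets all levels `ℕ^n` with `n ≥ |s|`. Hence `s ↦ |s|` is compact-preserving, locally infinite,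
and discontinuous everywhere.
-/

open Filter Topology Set

namespace ArhangelskiiFranklin

@[reducible] def topology : TopologicalSpace (List ℕ) where
  IsOpen U := ∀ s ∈ U, ∀ᶠ m in atTop, s ++ [m] ∈ U
  isOpen_univ _ _ := .of_forall fun _ => trivial
  isOpen_inter _ _ hU hV s hs := (hU s hs.1).and (hV s hs.2)
  isOpen_sUnion S hS := by
    rintro s ⟨U, hU, hsU⟩
    exact (hS U hU s hsU).mono fun m hm => ⟨U, hU, hm⟩

attribute [local instance] topology

theorem isOpen_iff {U : Set (List ℕ)} : IsOpen U ↔ ∀ s ∈ U, ∀ᶠ m in atTop, s ++ [m] ∈ U :=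
  Iff.rfl

theorem isClosed_of_finite_extensions {S : Set (List ℕ)}
    (h : ∀ v ∉ S, {m | v ++ [m] ∈ S}.Finite) : IsClosed S :=
  ⟨fun v hv => Nat.cofinite_eq_atTop ▸ (h v hv).eventually_cofinite_notMem⟩

theorem tendsto_append_singleton (s : List ℕ) :
    Tendsto (fun m => s ++ [m]) atTop (𝓝 s) :=
  tendsto_nhds.2 fun _ hU hsU => hU s hsU

theorem isClopen_setOf_prefix (w : List ℕ) : IsClopen {v | w <+: v} := by
  refine ⟨isClosed_of_finite_extensions fun v hv => ?_, fun v hv => ?_⟩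
  · refine Subsingleton.finite fun m hm m' hm' => ?_
    have hwm := (List.prefix_concat_iff.1 hm).resolve_right hv
    have hwm' := (List.prefix_concat_iff.1 hm').resolve_right hv
    simpa using hwm.symm.trans hwm'
  · exact .of_forall fun m => hv.trans (List.prefix_append v [m])

theorem t2Space : T2Space (List ℕ) := by
  refine ⟨fun x y hxy => ?_⟩
  wlog hyx : ¬ y <+: x generalizing x y
  · obtain ⟨u, v, hu, hv, hyu, hxv, huv⟩ :=
      this y x hxy.symm fun hxy' => hxy (hxy'.eq_of_length (le_antisymm hxy'.length_le
        (not_not.1 hyx).length_le))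
    exact ⟨v, u, hv, hu, hxv, hyu, huv.symm⟩
  exact ⟨_, _, (isClopen_setOf_prefix y).compl.isOpen, (isClopen_setOf_prefix y).isOpen, hyx,
    List.prefix_refl y, disjoint_compl_left⟩

theorem isClosed_of_injOn_length {S : Set (List ℕ)} (hS : InjOn List.length S) : IsClosed S := by
  refine isClosed_of_finite_extensions fun v _ => Subsingleton.finite fun m hm m' hm' => ?_
  simpa using hS hm hm' (by simp)

theorem isDiscrete_of_injOn_length {S : Set (List ℕ)} (hS : InjOn List.length S) :
    IsDiscrete S :=
  isDiscrete_iff_forall_mem_exists_isClosed.2 fun t htS =>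
    ⟨t, isClosed_of_injOn_length (hS.mono htS), inter_eq_left.2 htS⟩

theorem _root_.IsCompact.finite_length_image {K : Set (List ℕ)} (hK : IsCompact K) :
    (List.length '' K).Finite := by
  obtain ⟨S, hSK, hS⟩ := exists_subset_bijOn K List.length
  rw [← hS.image_eq]
  exact ((hK.of_isClosed_subset (isClosed_of_injOn_length hS.injOn) hSK).finite
    (isDiscrete_of_injOn_length hS.injOn)).image _

theorem Ici_length_subset_length_image {x : List ℕ} {U : Set (List ℕ)} (hU : U ∈ 𝓝 x) :
    Ici x.length ⊆ List.length '' U := by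
  obtain ⟨V, hVU, hV, hxV⟩ := mem_nhds_iff.1 hU
  refine fun n hn => image_mono hVU ?_
  induction n, hn using Nat.le_induction with
  | base => exact mem_image_of_mem _ hxV
  | succ n _ ih =>
    obtain ⟨v, hvV, rfl⟩ := ih
    obtain ⟨m, hm⟩ := (hV v hvV).exists
    exact ⟨v ++ [m], hm, by simp⟩

end ArhangelskiiFranklin

open ArhangelskiiFranklin in
theorem stmt17 :
    ∃ τ : TopologicalSpace (List ℕ),
      @T2Space (List ℕ) τ ∧
      (∀ U : Set (List ℕ), IsOpen[τ] U ↔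
        ∀ s ∈ U, ∀ᶠ m in Filter.atTop, s ++ [m] ∈ U) ∧
      ∃ f : List ℕ → ℝ,
        (∀ K : Set (List ℕ), @IsCompact (List ℕ) τ K → IsCompact (f '' K)) ∧
        (∀ x : List ℕ, ∀ U ∈ @nhds (List ℕ) τ x, (f '' U).Infinite) ∧
        (∀ x : List ℕ, ¬ @ContinuousAt (List ℕ) ℝ τ _ f x) := by
  let _ := topology
  refine ⟨topology, t2Space, fun _ => isOpen_iff, fun s => (s.length : ℝ),
    fun K hK => ?_, fun x U hU => ?_, fun x hx => ?_⟩
  · rw [← image_image Nat.cast List.length]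
    exact (hK.finite_length_image.image _).isCompact
  · rw [← image_image Nat.cast List.length]
    exact ((Ici_infinite _).mono (Ici_length_subset_length_image hU)).image
      Nat.cast_injective.injOn
  · have hlim : Tendsto (fun m => ((x ++ [m]).length : ℝ)) atTop (𝓝 (x.length + 1)) := by
      simp
    have := tendsto_nhds_unique (hx.tendsto.comp (tendsto_append_singleton x)) hlim
    simp at this
end
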